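/- arXiv:1408.6046 — 8 statements merged into one kernel-verified Lean document; each statement's English description precedes it below -/
import Mathlib

section
/- If the vertices of a graph G are partitioned into r independent sets of size 3, s independent sets of size 2, and t independent sets of size 1, and the maximum degree Δ of G satisfies 2Δ < |V(G)|, and r+s+t ≤ Δ, then for every integer m with r+s+t ≤ m ≤ Δ there is a partition of V(G) into a independent sets of size 3, b of size 2, and c of size 1 with a+b+c = m. -/
open Finset

variable {V : Type*}

/-- `P` is the set of color classes of an `[r,s,t]`-coloring of `G`:
a partition of the vertices into independent sets, with `r` classes of size 3,
`s` classes of size 2 and `t` singleton classes. -/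
def IsRST [Fintype V] [DecidableEq V] (G : SimpleGraph V) (P : Finset (Finset V))
    (r s t : ℕ) : Prop :=
  (∀ v : V, ∃! A, A ∈ P ∧ v ∈ A) ∧
  (∀ A ∈ P, ∀ u ∈ A, ∀ w ∈ A, ¬ G.Adj u w) ∧
  (P.filter (fun A => A.card = 3)).card = r ∧
  (P.filter (fun A => A.card = 2)).card = s ∧
  (P.filter (fun A => A.card = 1)).card = t ∧
  (∀ A ∈ P, A.card = 1 ∨ A.card = 2 ∨ A.card = 3)

/-- A maximal `[r,s,t]`-coloring: for any other `[r',s',t']`-coloring,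
either `r > r'`, or `r = r'` and `s ≥ s'`. -/
def IsMaxRST [Fintype V] [DecidableEq V] (G : SimpleGraph V) (P : Finset (Finset V))
    (r s t : ℕ) : Prop :=
  IsRST G P r s t ∧
  ∀ (P' : Finset (Finset V)) (r' s' t' : ℕ), IsRST G P' r' s' t' →
    r' < r ∨ (r' = r ∧ s' ≤ s)

/-- `eB G X Y` is the number of edges with one endpoint in `X` and the other in `Y`. -/
def eB [Fintype V] [DecidableEq V] (G : SimpleGraph V) [DecidableRel G.Adj]
    (X Y : Finset V) : ℕ :=
  ((X ×ˢ Y).filter fun p => G.Adj p.1 p.2).card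

/-- `G` is equitably `k`-colorable: a proper `k`-coloring whose color classes
have sizes differing pairwise by at most 1. -/
def EqColorable [Fintype V] (G : SimpleGraph V) (k : ℕ) : Prop :=
  ∃ C : V → Fin k, (∀ u v, G.Adj u v → C u ≠ C v) ∧
    ∀ i j : Fin k,
      (Finset.univ.filter fun v => C v = i).card ≤
        (Finset.univ.filter fun v => C v = j).card + 1

/-!
Splitting one vertex off a color class of size 2 or 3 yields a coloring with one more class.
Such a class exists as long as there are fewer classes than vertices, and every `m ≤ Δ` is
below `|V(G)|`, so the number of classes can be raised one step at a time up to `m`.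
-/

def splitOff [DecidableEq V] (P : Finset (Finset V)) (A : Finset V) (v : V) :
    Finset (Finset V) :=
  insert {v} (insert (A.erase v) (P.erase A))

theorem mem_splitOff [DecidableEq V] {P : Finset (Finset V)} {A B : Finset V} {v : V} :
    B ∈ splitOff P A v ↔ B = {v} ∨ B = A.erase v ∨ (B ≠ A ∧ B ∈ P) := by
  simp only [splitOff, mem_insert, mem_erase]

section splitOff

variable [DecidableEq V] {P : Finset (Finset V)} {A : Finset V} {v : V}

theorem existsUnique_mem_splitOff (hP : ∀ u : V, ∃! B, B ∈ P ∧ u ∈ B) (hA : A ∈ P)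
    (hv : v ∈ A) (u : V) : ∃! B, B ∈ splitOff P A v ∧ u ∈ B := by
  have hclass : ∀ w ∈ A, ∀ B ∈ P, w ∈ B → B = A := fun w hw B hB hwB =>
    (hP w).unique ⟨hB, hwB⟩ ⟨hA, hw⟩
  obtain ⟨B, ⟨hB, huB⟩, hBuniq⟩ := hP u
  simp only [ExistsUnique, mem_splitOff]
  grind

theorem card_splitOff (hP : ∀ u : V, ∃! B, B ∈ P ∧ u ∈ B) (hA : A ∈ P) (hv : v ∈ A)
    (hcard : 2 ≤ #A) : #(splitOff P A v) = #P + 1 := by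
  have hcard_erase : #(A.erase v) = #A - 1 := card_erase_of_mem hv
  obtain ⟨w, hw⟩ : (A.erase v).Nonempty := card_pos.mp (by omega)
  have hsingleton : ({v} : Finset V) ∉ insert (A.erase v) (P.erase A) := by
    simp only [mem_insert, mem_erase]
    rintro (h | ⟨hne, hmem⟩)
    · exact notMem_erase v A (h ▸ mem_singleton_self v)
    · exact hne ((hP v).unique ⟨hmem, mem_singleton_self v⟩ ⟨hA, hv⟩)
  have herase : A.erase v ∉ P.erase A := fun h =>
    (mem_erase.mp h).1 ((hP w).unique ⟨mem_of_mem_erase h, hw⟩ ⟨hA, mem_of_mem_erase hw⟩)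
  rw [splitOff, card_insert_of_notMem hsingleton, card_insert_of_notMem herase,
    card_erase_add_one hA]

end splitOff

namespace IsRST

variable [Fintype V] [DecidableEq V] {G : SimpleGraph V} {P : Finset (Finset V)} {r s t : ℕ}

theorem card_eq (hP : IsRST G P r s t) : #P = r + s + t := by
  obtain ⟨-, -, rfl, rfl, rfl, hsize⟩ := hP
  rw [card_filter, card_filter, card_filter, ← sum_add_distrib, ← sum_add_distrib,
    card_eq_sum_ones]
  refine sum_congr rfl fun A hA => ?_
  rcases hsize A hA with h | h | h <;> simp [h]

theorem sum_card_eq (hP : IsRST G P r s t) : ∑ A ∈ P, #A = Fintype.card V := by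
  have hcover : P.biUnion id = univ := by
    ext v
    obtain ⟨A, ⟨hA, hv⟩, -⟩ := hP.1 v
    simpa using ⟨A, hA, hv⟩
  have hdisj : (P : Set (Finset V)).PairwiseDisjoint id := fun A hA B hB hne =>
    disjoint_left.mpr fun v hvA hvB => hne ((hP.1 v).unique ⟨hA, hvA⟩ ⟨hB, hvB⟩)
  rw [← card_univ, ← hcover, card_biUnion hdisj]
  rfl

theorem exists_two_le_card (hP : IsRST G P r s t) (h : #P < Fintype.card V) :
    ∃ A ∈ P, 2 ≤ #A := by
  rw [← hP.sum_card_eq, card_eq_sum_ones] at h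
  exact exists_lt_of_sum_lt h

theorem isRST_splitOff (hP : IsRST G P r s t) {A : Finset V} (hA : A ∈ P) {v : V} (hv : v ∈ A)
    (hcard : 2 ≤ #A) :
    IsRST G (splitOff P A v) #((splitOff P A v).filter (#· = 3))
      #((splitOff P A v).filter (#· = 2)) #((splitOff P A v).filter (#· = 1)) := by
  obtain ⟨hcover, hindep, -, -, -, hsize⟩ := hP
  refine ⟨existsUnique_mem_splitOff hcover hA hv, ?_, rfl, rfl, rfl, ?_⟩
  · intro B hB
    rcases mem_splitOff.mp hB with rfl | rfl | ⟨-, hB⟩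
    · simp
    · exact fun u hu w hw => hindep A hA u (mem_of_mem_erase hu) w (mem_of_mem_erase hw)
    · exact hindep B hB
  · intro B hB
    rcases mem_splitOff.mp hB with rfl | rfl | ⟨-, hB⟩
    · simp
    · have := hsize A hA
      rw [card_erase_of_mem hv]
      omega
    · exact hsize B hB

theorem exists_succ (hP : IsRST G P r s t) (h : r + s + t < Fintype.card V) :
    ∃ (Q : Finset (Finset V)) (a b c : ℕ), IsRST G Q a b c ∧ a + b + c = r + s + t + 1 := by
  obtain ⟨A, hA, hcard⟩ := hP.exists_two_le_card (hP.card_eq ▸ h)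
  obtain ⟨v, hv⟩ : A.Nonempty := card_pos.mp (by omega)
  have hQ := hP.isRST_splitOff hA hv hcard
  refine ⟨_, _, _, _, hQ, ?_⟩
  rw [← hQ.card_eq, card_splitOff hP.1 hA hv hcard, hP.card_eq]

theorem exists_of_le (hP : IsRST G P r s t) {m : ℕ} (hm : r + s + t ≤ m)
    (hmV : m ≤ Fintype.card V) :
    ∃ (Q : Finset (Finset V)) (a b c : ℕ), IsRST G Q a b c ∧ a + b + c = m := by
  induction m, hm using Nat.le_induction with
  | base => exact ⟨P, r, s, t, hP, rfl⟩
  | succ n _ ih =>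
    obtain ⟨Q, a, b, c, hQ, rfl⟩ := ih (by omega)
    exact hQ.exists_succ (by omega)

end IsRST

theorem stmt0_general [Fintype V] [DecidableEq V] (G : SimpleGraph V) [DecidableRel G.Adj]
    (P : Finset (Finset V)) (r s t : ℕ)
    (hP : IsRST G P r s t)
    (hΔ : 2 * G.maxDegree < Fintype.card V) :
    ∀ m : ℕ, r + s + t ≤ m → m ≤ G.maxDegree →
      ∃ (Q : Finset (Finset V)) (a b c : ℕ), IsRST G Q a b c ∧ a + b + c = m :=
  fun _ hm hmΔ => hP.exists_of_le hm (by omega)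

theorem stmt0 [Fintype V] [DecidableEq V] (G : SimpleGraph V) [DecidableRel G.Adj]
    (P : Finset (Finset V)) (r s t : ℕ)
    (hP : IsRST G P r s t)
    (hΔ : 2 * G.maxDegree < Fintype.card V)
    (hle : r + s + t ≤ G.maxDegree) :
    ∀ m : ℕ, r + s + t ≤ m → m ≤ G.maxDegree →
      ∃ (Q : Finset (Finset V)) (a b c : ℕ), IsRST G Q a b c ∧ a + b + c = m :=
  stmt0_general G P r s t hP hΔ
end

section
/- If a graph G with maximum degree Δ < |V(G)|/2 admits a partition of its vertex set into r independent sets of size 3, s independent sets of size 2, and t singleton sets with r+s+t ≤ Δ, then G is equitably (r+s+t)-colorable, i.e., G admits a proper coloring with r+s+t colors in which the sizes of any two color classes differ by at most 1. -/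
open Finset

variable {V : Type*}

set_option linter.unusedSectionVars false
set_option maxHeartbeats 1000000

section aux
variable [Fintype V] [DecidableEq V] {G : SimpleGraph V} {P : Finset (Finset V)} {r s t : ℕ}

lemma IsRST.mem_unique (h : IsRST G P r s t) {A B : Finset V} {v : V}
    (hA : A ∈ P) (hB : B ∈ P) (hvA : v ∈ A) (hvB : v ∈ B) : A = B := by
  obtain ⟨C, _, hC⟩ := h.1 v
  rw [hC A ⟨hA, hvA⟩, hC B ⟨hB, hvB⟩]

/-- any finset's card splits along the partition -/
lemma IsRST.card_eq_sum (h : IsRST G P r s t) (S : Finset V) :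
    S.card = ∑ A ∈ P, (S ∩ A).card := by
  have hbu : P.biUnion (fun A => S ∩ A) = S := by
    ext v
    simp only [mem_biUnion, mem_inter]
    constructor
    · rintro ⟨A, _, hv, _⟩; exact hv
    · intro hv
      obtain ⟨A, ⟨hAP, hvA⟩, _⟩ := h.1 v
      exact ⟨A, hAP, hv, hvA⟩
  have hdisj : ∀ A ∈ P, ∀ B ∈ P, A ≠ B → Disjoint (S ∩ A) (S ∩ B) := by
    intro A hA B hB hne
    exact Finset.disjoint_left.2 (fun v hv hv' => hne
      (h.mem_unique hA hB (Finset.mem_inter.1 hv).2 (Finset.mem_inter.1 hv').2))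
  calc S.card = (P.biUnion fun A => S ∩ A).card := (congrArg Finset.card hbu).symm
    _ = ∑ A ∈ P, (S ∩ A).card := Finset.card_biUnion hdisj

lemma IsRST.split_eq (h : IsRST G P r s t) :
    P = (P.filter (fun A => A.card = 3)) ∪ ((P.filter (fun A => A.card = 2)) ∪ (P.filter (fun A => A.card = 1))) := by
  ext A
  simp only [mem_union, mem_filter]
  constructor
  · intro hA
    rcases h.2.2.2.2.2 A hA with h1 | h2 | h3
    · exact Or.inr (Or.inr ⟨hA, h1⟩)
    · exact Or.inr (Or.inl ⟨hA, h2⟩)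
    · exact Or.inl ⟨hA, h3⟩
  · rintro (⟨hA, _⟩ | ⟨hA, _⟩ | ⟨hA, _⟩) <;> exact hA

lemma IsRST.disj21 (h : IsRST G P r s t) :
    Disjoint (P.filter (fun A => A.card = 2)) (P.filter (fun A => A.card = 1)) := by
  rw [Finset.disjoint_left]
  intro A hA hA'
  simp only [mem_filter] at hA hA'
  omega

lemma IsRST.disj321 (h : IsRST G P r s t) :
    Disjoint (P.filter (fun A => A.card = 3))
      ((P.filter (fun A => A.card = 2)) ∪ (P.filter (fun A => A.card = 1))) := by
  rw [Finset.disjoint_left]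
  intro A hA hA'
  simp only [mem_union, mem_filter] at hA hA'
  rcases hA' with h' | h' <;> omega

lemma IsRST.card_P (h : IsRST G P r s t) : P.card = r + s + t := by
  calc P.card
      = ((P.filter (fun A => A.card = 3)) ∪ ((P.filter (fun A => A.card = 2)) ∪ (P.filter (fun A => A.card = 1)))).card :=
        congrArg Finset.card h.split_eq
    _ = (P.filter (fun A => A.card = 3)).card + ((P.filter (fun A => A.card = 2)).card + (P.filter (fun A => A.card = 1)).card) := by
        rw [Finset.card_union_of_disjoint h.disj321, Finset.card_union_of_disjoint h.disj21]
    _ = r + s + t := by rw [h.2.2.1, h.2.2.2.1, h.2.2.2.2.1]; omega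

lemma IsRST.card_V (h : IsRST G P r s t) : Fintype.card V = 3 * r + 2 * s + t := by
  have hsum := h.card_eq_sum Finset.univ
  simp only [Finset.univ_inter] at hsum
  rw [← Finset.card_univ, hsum]
  calc ∑ A ∈ P, A.card
      = ∑ A ∈ (P.filter (fun A => A.card = 3)) ∪ ((P.filter (fun A => A.card = 2)) ∪ (P.filter (fun A => A.card = 1))), A.card := by
        rw [← h.split_eq]
    _ = ∑ A ∈ P.filter (fun A => A.card = 3), A.card
        + (∑ A ∈ P.filter (fun A => A.card = 2), A.card
          + ∑ A ∈ P.filter (fun A => A.card = 1), A.card) := by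
        rw [Finset.sum_union h.disj321, Finset.sum_union h.disj21]
    _ = 3 * r + 2 * s + t := by
        rw [Finset.sum_congr rfl (fun A hA => (mem_filter.1 hA).2),
          Finset.sum_congr rfl (fun A (hA : A ∈ P.filter (fun A => A.card = 2)) => (mem_filter.1 hA).2),
          Finset.sum_congr rfl (fun A (hA : A ∈ P.filter (fun A => A.card = 1)) => (mem_filter.1 hA).2)]
        simp only [Finset.sum_const, smul_eq_mul]
        rw [h.2.2.1, h.2.2.2.1, h.2.2.2.2.1]
        ring

lemma filter_card_replace (P old new : Finset (Finset V)) (hold : old ⊆ P)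
    (hdisj : ∀ A ∈ new, A ∉ P \ old) (p : Finset V → Prop) [DecidablePred p] :
    (((P \ old) ∪ new).filter p).card
      = (P.filter p).card - (old.filter p).card + (new.filter p).card := by
  have hsd : (P \ old).filter p = P.filter p \ old.filter p := by
    ext A; simp only [mem_filter, mem_sdiff]; tauto
  rw [Finset.filter_union, Finset.card_union_of_disjoint, hsd,
    Finset.card_sdiff_of_subset (Finset.filter_subset_filter p hold)]
  rw [Finset.disjoint_left]
  intro A hA hA'
  exact hdisj A (Finset.mem_filter.1 hA').1 (Finset.mem_filter.1 hA).1


lemma IsRST.replace (h : IsRST G P r s t) (old new : Finset (Finset V))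
    (hold : old ⊆ P)
    (hsub : ∀ A ∈ new, ∀ v ∈ A, ∃ B ∈ old, v ∈ B)
    (hcov : ∀ B ∈ old, ∀ v ∈ B, ∃ A ∈ new, v ∈ A)
    (hdisjn : ∀ A ∈ new, ∀ B ∈ new, ∀ v : V, v ∈ A → v ∈ B → A = B)
    (hind : ∀ A ∈ new, ∀ u ∈ A, ∀ w ∈ A, ¬ G.Adj u w)
    (hsize : ∀ A ∈ new, A.card = 1 ∨ A.card = 2 ∨ A.card = 3)
    (hne : ∀ A ∈ new, A.Nonempty) :
    (∀ A ∈ new, A ∉ P \ old) ∧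
    IsRST G ((P \ old) ∪ new)
      (r - (old.filter (fun A => A.card = 3)).card + (new.filter (fun A => A.card = 3)).card)
      (s - (old.filter (fun A => A.card = 2)).card + (new.filter (fun A => A.card = 2)).card)
      (t - (old.filter (fun A => A.card = 1)).card + (new.filter (fun A => A.card = 1)).card) := by
  have hdisj : ∀ A ∈ new, A ∉ P \ old := by
    intro A hA hA'
    obtain ⟨v, hv⟩ := hne A hA
    obtain ⟨B, hB, hvB⟩ := hsub A hA v hv
    have := h.mem_unique (Finset.mem_sdiff.1 hA').1 (hold hB) hv hvB
    exact (Finset.mem_sdiff.1 hA').2 (this ▸ hB)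
  refine ⟨hdisj, ?_, ?_, ?_, ?_, ?_, ?_⟩
  · intro v
    by_cases hvold : ∃ B ∈ old, v ∈ B
    · obtain ⟨B, hB, hvB⟩ := hvold
      obtain ⟨A, hA, hvA⟩ := hcov B hB v hvB
      refine ⟨A, ⟨Finset.mem_union_right _ hA, hvA⟩, ?_⟩
      rintro C ⟨hC, hvC⟩
      rcases Finset.mem_union.1 hC with hC' | hC'
      · exfalso
        have := h.mem_unique (Finset.mem_sdiff.1 hC').1 (hold hB) hvC hvB
        exact (Finset.mem_sdiff.1 hC').2 (this ▸ hB)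
      · exact hdisjn C hC' A hA v hvC hvA
    · obtain ⟨B, ⟨hBP, hvB⟩, hBu⟩ := h.1 v
      have hBnold : B ∉ old := fun hc => hvold ⟨B, hc, hvB⟩
      refine ⟨B, ⟨Finset.mem_union_left _ (Finset.mem_sdiff.2 ⟨hBP, hBnold⟩), hvB⟩, ?_⟩
      rintro C ⟨hC, hvC⟩
      rcases Finset.mem_union.1 hC with hC' | hC'
      · exact hBu C ⟨(Finset.mem_sdiff.1 hC').1, hvC⟩
      · exact absurd (hsub C hC' v hvC) (fun ⟨D, hD, hvD⟩ => hvold ⟨D, hD, hvD⟩)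
  · intro A hA
    rcases Finset.mem_union.1 hA with hA' | hA'
    · exact h.2.1 A (Finset.mem_sdiff.1 hA').1
    · exact hind A hA'
  · rw [filter_card_replace P old new hold hdisj, h.2.2.1]
  · rw [filter_card_replace P old new hold hdisj, h.2.2.2.1]
  · rw [filter_card_replace P old new hold hdisj, h.2.2.2.2.1]
  · intro A hA
    rcases Finset.mem_union.1 hA with hA' | hA'
    · exact h.2.2.2.2.2 A (Finset.mem_sdiff.1 hA').1
    · exact hsize A hA'


lemma claim1 (hno : ∀ Q : Finset (Finset V), ¬ IsRST G Q r (s + 2) t)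
    {P' : Finset (Finset V)} (h : IsRST G P' (r + 1) s (t + 1))
    {w u : V} {A : Finset V} (hw : ({w} : Finset V) ∈ P') (hA : A ∈ P')
    (hA3 : A.card = 3) (hu : u ∈ A) : G.Adj w u := by
  by_contra hadj
  have hwA : w ∉ A := by
    intro hc
    have e := h.mem_unique hw hA (Finset.mem_singleton_self w) hc
    rw [← e] at hA3; simp at hA3
  have hne_wu : w ≠ u := fun e => hwA (e ▸ hu)
  have hAw : A ≠ {w} := by intro e; rw [e] at hA3; simp at hA3
  have hcards : (A.erase u).card = 2 := by rw [Finset.card_erase_of_mem hu, hA3]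
  have hcarduw : ({u, w} : Finset V).card = 2 := by
    rw [Finset.card_insert_of_notMem (by simp [hne_wu.symm]), Finset.card_singleton]
  have hvcontra : ∀ v : V, v ∈ A.erase u → v ∈ ({u, w} : Finset V) → False := by
    intro v h1 h2
    simp only [Finset.mem_insert, Finset.mem_singleton] at h2
    rcases h2 with rfl | rfl
    · exact (Finset.mem_erase.1 h1).1 rfl
    · exact hwA (Finset.mem_of_mem_erase h1)
  have henew : A.erase u ≠ ({u, w} : Finset V) := by
    intro e
    have : u ∈ A.erase u := by rw [e]; simp
    simp at this
  obtain ⟨-, hrep⟩ := h.replace {A, {w}} {A.erase u, {u, w}}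
    (by intro X hX
        rcases Finset.mem_insert.1 hX with e | e
        · exact e ▸ hA
        · rw [Finset.mem_singleton.1 e]; exact hw)
    (by intro X hX v hv
        rcases Finset.mem_insert.1 hX with rfl | e
        · exact ⟨A, Finset.mem_insert_self _ _, Finset.mem_of_mem_erase hv⟩
        · rw [Finset.mem_singleton.1 e] at hv
          rcases Finset.mem_insert.1 hv with rfl | e'
          · exact ⟨A, Finset.mem_insert_self _ _, hu⟩
          · exact ⟨{w}, by simp, by simp [Finset.mem_singleton.1 e']⟩)
    (by intro B hB v hv
        rcases Finset.mem_insert.1 hB with rfl | e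
        · by_cases hvu : v = u
          · exact ⟨{u, w}, by simp, by simp [hvu]⟩
          · exact ⟨B.erase u, by simp, Finset.mem_erase.2 ⟨hvu, hv⟩⟩
        · rw [Finset.mem_singleton.1 e] at hv
          exact ⟨{u, w}, by simp, by simp [Finset.mem_singleton.1 hv]⟩)
    (by intro X hX Y hY v hvX hvY
        simp only [Finset.mem_insert, Finset.mem_singleton] at hX hY
        rcases hX with rfl | rfl <;> rcases hY with rfl | rfl
        · rfl
        · exact absurd (hvcontra v hvX hvY) (by simp)
        · exact absurd (hvcontra v hvY hvX) (by simp)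
        · rfl)
    (by intro X hX a ha b hb
        simp only [Finset.mem_insert, Finset.mem_singleton] at hX
        rcases hX with rfl | rfl
        · exact h.2.1 A hA a (Finset.mem_of_mem_erase ha) b (Finset.mem_of_mem_erase hb)
        · simp only [Finset.mem_insert, Finset.mem_singleton] at ha hb
          rcases ha with rfl | rfl <;> rcases hb with rfl | rfl
          · exact fun hc => G.irrefl hc
          · exact fun hc => hadj hc.symm
          · exact fun hc => hadj hc
          · exact fun hc => G.irrefl hc)
    (by intro X hX
        simp only [Finset.mem_insert, Finset.mem_singleton] at hX
        rcases hX with rfl | rfl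
        · right; left; exact hcards
        · right; left; exact hcarduw)
    (by intro X hX
        simp only [Finset.mem_insert, Finset.mem_singleton] at hX
        rcases hX with rfl | rfl
        · exact Finset.card_pos.1 (by rw [hcards]; norm_num)
        · exact ⟨u, by simp⟩)
  have e3 : (({A, {w}} : Finset (Finset V)).filter (fun X => X.card = 3)).card = 1 := by
    rw [Finset.filter_insert, if_pos hA3, Finset.filter_singleton]
    rw [if_neg (by simp)]
    simp
  have e2 : (({A, {w}} : Finset (Finset V)).filter (fun X => X.card = 2)).card = 0 := by
    rw [Finset.filter_insert, if_neg (by omega), Finset.filter_singleton, if_neg (by simp)]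
    simp
  have e1 : (({A, {w}} : Finset (Finset V)).filter (fun X => X.card = 1)).card = 1 := by
    rw [Finset.filter_insert, if_neg (by omega), Finset.filter_singleton, if_pos (by simp)]
    simp
  have f3 : (({A.erase u, {u, w}} : Finset (Finset V)).filter (fun X => X.card = 3)).card = 0 := by
    rw [Finset.filter_insert, if_neg (by omega), Finset.filter_singleton, if_neg (by omega)]
    simp
  have f2 : (({A.erase u, {u, w}} : Finset (Finset V)).filter (fun X => X.card = 2)).card = 2 := by
    rw [Finset.filter_insert, if_pos hcards, Finset.filter_singleton, if_pos hcarduw]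
    rw [Finset.card_insert_of_notMem (by simp [henew]), Finset.card_singleton]
  have f1 : (({A.erase u, {u, w}} : Finset (Finset V)).filter (fun X => X.card = 1)).card = 0 := by
    rw [Finset.filter_insert, if_neg (by omega), Finset.filter_singleton, if_neg (by omega)]
    simp
  rw [e3, e2, e1, f3, f2, f1] at hrep
  norm_num at hrep
  exact hno _ hrep


lemma claimT (hno : ∀ Q : Finset (Finset V), ¬ IsRST G Q r (s + 2) t)
    (h : IsRST G P (r + 1) s (t + 1))
    {v u : V} {A B : Finset V} (hv : ({v} : Finset V) ∈ P)
    (hB : B ∈ P) (hB2 : B.card = 2) (hA : A ∈ P) (hA3 : A.card = 3) (hu : u ∈ A)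
    (hux : ∀ b ∈ B, ¬ G.Adj u b) : ∀ b ∈ B, G.Adj v b := by
  have hAB : A ≠ B := by intro e; rw [e, hB2] at hA3; omega
  have hdAB : ∀ x : V, x ∈ A → x ∈ B → False := by
    intro x h1 h2; exact hAB (h.mem_unique hA hB h1 h2)
  have huB : u ∉ B := fun hc => hdAB u hu hc
  have hvA : ({v} : Finset V) ≠ A := by intro e; rw [← e] at hA3; simp at hA3
  have hvB : ({v} : Finset V) ≠ B := by intro e; rw [← e] at hB2; simp at hB2
  have hcarde : (A.erase u).card = 2 := by rw [Finset.card_erase_of_mem hu, hA3]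
  have hcardi : (insert u B).card = 3 := by rw [Finset.card_insert_of_notMem huB, hB2]
  have henei : A.erase u ≠ insert u B := by
    intro e
    have : u ∈ A.erase u := by rw [e]; simp
    simp at this
  have hs1 : 1 ≤ s := by
    have h1 : B ∈ P.filter (fun X => X.card = 2) := Finset.mem_filter.2 ⟨hB, hB2⟩
    have h2 := Finset.card_pos.2 ⟨B, h1⟩
    have h3 := h.2.2.2.1
    omega
  obtain ⟨-, hrep⟩ := h.replace {A, B} {A.erase u, insert u B}
    (by intro X hX
        rcases Finset.mem_insert.1 hX with rfl | e
        · exact hA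
        · rw [Finset.mem_singleton.1 e]; exact hB)
    (by intro X hX x hx
        simp only [Finset.mem_insert, Finset.mem_singleton] at hX
        rcases hX with rfl | rfl
        · exact ⟨A, by simp, Finset.mem_of_mem_erase hx⟩
        · rcases Finset.mem_insert.1 hx with rfl | hx'
          · exact ⟨A, by simp, hu⟩
          · exact ⟨B, by simp, hx'⟩)
    (by intro X hX x hx
        simp only [Finset.mem_insert, Finset.mem_singleton] at hX
        rcases hX with e | e
        · rw [e] at hx
          by_cases hxu : x = u
          · exact ⟨insert u B, by simp, by simp [hxu]⟩
          · exact ⟨A.erase u, by simp, Finset.mem_erase.2 ⟨hxu, hx⟩⟩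
        · rw [e] at hx
          exact ⟨insert u B, by simp, Finset.mem_insert_of_mem hx⟩)
    (by intro X hX Y hY x hvX hvY
        simp only [Finset.mem_insert, Finset.mem_singleton] at hX hY
        have key : ∀ z : V, z ∈ A.erase u → z ∈ insert u B → False := by
          intro z h1 h2
          rcases Finset.mem_insert.1 h2 with rfl | h2'
          · exact (Finset.mem_erase.1 h1).1 rfl
          · exact hdAB z (Finset.mem_of_mem_erase h1) h2'
        rcases hX with rfl | rfl <;> rcases hY with rfl | rfl
        · rfl
        · exact absurd (key x hvX hvY) (by simp)
        · exact absurd (key x hvY hvX) (by simp)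
        · rfl)
    (by intro X hX a ha b hb
        simp only [Finset.mem_insert, Finset.mem_singleton] at hX
        rcases hX with rfl | rfl
        · exact h.2.1 A hA a (Finset.mem_of_mem_erase ha) b (Finset.mem_of_mem_erase hb)
        · rcases Finset.mem_insert.1 ha with rfl | ha' <;> rcases Finset.mem_insert.1 hb with rfl | hb'
          · exact fun hc => G.irrefl hc
          · exact hux b hb'
          · exact fun hc => hux a ha' hc.symm
          · exact h.2.1 B hB a ha' b hb')
    (by intro X hX
        simp only [Finset.mem_insert, Finset.mem_singleton] at hX
        rcases hX with rfl | rfl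
        · right; left; exact hcarde
        · right; right; exact hcardi)
    (by intro X hX
        simp only [Finset.mem_insert, Finset.mem_singleton] at hX
        rcases hX with rfl | rfl
        · exact Finset.card_pos.1 (by rw [hcarde]; norm_num)
        · exact ⟨u, by simp⟩)
  have e3 : (({A, B} : Finset (Finset V)).filter (fun X => X.card = 3)).card = 1 := by
    rw [Finset.filter_insert, if_pos hA3, Finset.filter_singleton, if_neg (by omega)]
    simp
  have e2 : (({A, B} : Finset (Finset V)).filter (fun X => X.card = 2)).card = 1 := by
    rw [Finset.filter_insert, if_neg (by omega), Finset.filter_singleton, if_pos hB2]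
    simp
  have e1 : (({A, B} : Finset (Finset V)).filter (fun X => X.card = 1)).card = 0 := by
    rw [Finset.filter_insert, if_neg (by omega), Finset.filter_singleton, if_neg (by omega)]
    simp
  have f3 : (({A.erase u, insert u B} : Finset (Finset V)).filter (fun X => X.card = 3)).card = 1 := by
    rw [Finset.filter_insert, if_neg (by omega), Finset.filter_singleton, if_pos hcardi]
    simp
  have f2 : (({A.erase u, insert u B} : Finset (Finset V)).filter (fun X => X.card = 2)).card = 1 := by
    rw [Finset.filter_insert, if_pos hcarde, Finset.filter_singleton, if_neg (by omega)]
    simp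
  have f1 : (({A.erase u, insert u B} : Finset (Finset V)).filter (fun X => X.card = 1)).card = 0 := by
    rw [Finset.filter_insert, if_neg (by omega), Finset.filter_singleton, if_neg (by omega)]
    simp
  rw [e3, e2, e1, f3, f2, f1] at hrep
  have er : r + 1 - 1 + 1 = r + 1 := by omega
  have es : s - 1 + 1 = s := by omega
  have et : t + 1 - 0 + 0 = t + 1 := by omega
  rw [er, es, et] at hrep
  -- {v} is still a class of the new partition, and `insert u B` is a triple of it
  have hvmem : ({v} : Finset V) ∈ (P \ {A, B}) ∪ {A.erase u, insert u B} :=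
    Finset.mem_union_left _ (Finset.mem_sdiff.2 ⟨hv, by simp [hvA, hvB]⟩)
  have hiB : insert u B ∈ (P \ {A, B}) ∪ {A.erase u, insert u B} :=
    Finset.mem_union_right _ (by simp)
  intro b hb
  exact claim1 hno hrep hvmem hiB hcardi (Finset.mem_insert_of_mem hb)


lemma claimF4 (hno : ∀ Q : Finset (Finset V), ¬ IsRST G Q r (s + 2) t)
    (h : IsRST G P (r + 1) s (t + 1))
    {v u x : V} {A B : Finset V} (hv : ({v} : Finset V) ∈ P)
    (hB : B ∈ P) (hB2 : B.card = 2) (hvb : ∀ b ∈ B, ¬ G.Adj v b)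
    (hA : A ∈ P) (hA3 : A.card = 3) (hu : u ∈ A) (hx : x ∈ B) : G.Adj x u := by
  by_contra hxu
  -- the other vertex of B
  have hcardBe : (B.erase x).card = 1 := by rw [Finset.card_erase_of_mem hx, hB2]
  obtain ⟨y, hy⟩ := Finset.card_eq_one.1 hcardBe
  have hyBe : y ∈ B.erase x := by rw [hy]; simp
  have hyB : y ∈ B := Finset.mem_of_mem_erase hyBe
  have hyx : y ≠ x := (Finset.mem_erase.1 hyBe).1
  have hBmem : ∀ b ∈ B, b = x ∨ b = y := by
    intro b hb
    by_cases hbx : b = x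
    · exact Or.inl hbx
    · right
      have : b ∈ B.erase x := Finset.mem_erase.2 ⟨hbx, hb⟩
      rw [hy] at this; exact Finset.mem_singleton.1 this
  have hAB : A ≠ B := by intro e; rw [e, hB2] at hA3; omega
  have hdAB : ∀ z : V, z ∈ A → z ∈ B → False := by
    intro z h1 h2; exact hAB (h.mem_unique hA hB h1 h2)
  have hvA : ({v} : Finset V) ≠ A := by intro e; rw [← e] at hA3; simp at hA3
  have hvB : ({v} : Finset V) ≠ B := by intro e; rw [← e] at hB2; simp at hB2
  have hvnA : v ∉ A := fun hc => hvA (h.mem_unique hv hA (Finset.mem_singleton_self v) hc)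
  have hvnB : v ∉ B := fun hc => hvB (h.mem_unique hv hB (Finset.mem_singleton_self v) hc)
  have huB : u ∉ B := fun hc => hdAB u hu hc
  have hxA : x ∉ A := fun hc => hdAB x hc hx
  have hyA : y ∉ A := fun hc => hdAB y hc hyB
  have hux : u ≠ x := fun e => hxA (e ▸ hu)
  have huv : u ≠ v := fun e => hvnA (e ▸ hu)
  have huy : u ≠ y := fun e => hyA (e ▸ hu)
  have hxv : x ≠ v := fun e => hvnB (e ▸ hx)
  have hyv : y ≠ v := fun e => hvnB (e ▸ hyB)
  have hcarde : (A.erase u).card = 2 := by rw [Finset.card_erase_of_mem hu, hA3]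
  have hcardux : ({u, x} : Finset V).card = 2 := by
    rw [Finset.card_insert_of_notMem (by simp [hux]), Finset.card_singleton]
  have hcardvy : ({v, y} : Finset V).card = 2 := by
    rw [Finset.card_insert_of_notMem (by simp [Ne.symm hyv]), Finset.card_singleton]
  have hne1 : A.erase u ≠ ({u, x} : Finset V) := by
    intro e
    have : u ∈ A.erase u := by rw [e]; simp
    simp at this
  have hne2 : A.erase u ≠ ({v, y} : Finset V) := by
    intro e
    have : v ∈ A.erase u := by rw [e]; simp
    exact hvnA (Finset.mem_of_mem_erase this)
  have hne3 : ({u, x} : Finset V) ≠ ({v, y} : Finset V) := by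
    intro e
    have : u ∈ ({v, y} : Finset V) := by rw [← e]; simp
    simp only [Finset.mem_insert, Finset.mem_singleton] at this
    rcases this with e' | e'
    · exact huv e'
    · exact huy e'
  have hs1 : 1 ≤ s := by
    have h1 : B ∈ P.filter (fun X => X.card = 2) := Finset.mem_filter.2 ⟨hB, hB2⟩
    have h2 := Finset.card_pos.2 ⟨B, h1⟩
    have h3 := h.2.2.2.1
    omega
  obtain ⟨-, hrep⟩ := h.replace {A, B, {v}} {A.erase u, {u, x}, {v, y}}
    (by intro X hX
        simp only [Finset.mem_insert, Finset.mem_singleton] at hX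
        rcases hX with e | e | e <;> rw [e]
        · exact hA
        · exact hB
        · exact hv)
    (by intro X hX z hz
        simp only [Finset.mem_insert, Finset.mem_singleton] at hX
        rcases hX with e | e | e <;> rw [e] at hz
        · exact ⟨A, by simp, Finset.mem_of_mem_erase hz⟩
        · rcases Finset.mem_insert.1 hz with e' | e'
          · exact ⟨A, by simp, e' ▸ hu⟩
          · exact ⟨B, by simp, (Finset.mem_singleton.1 e') ▸ hx⟩
        · rcases Finset.mem_insert.1 hz with e' | e'
          · exact ⟨{v}, by simp, by simp [e']⟩
          · exact ⟨B, by simp, (Finset.mem_singleton.1 e') ▸ hyB⟩)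
    (by intro X hX z hz
        simp only [Finset.mem_insert, Finset.mem_singleton] at hX
        rcases hX with e | e | e <;> rw [e] at hz
        · by_cases hzu : z = u
          · exact ⟨{u, x}, by simp, by simp [hzu]⟩
          · exact ⟨A.erase u, by simp, Finset.mem_erase.2 ⟨hzu, hz⟩⟩
        · rcases hBmem z hz with e' | e'
          · exact ⟨{u, x}, by simp, by simp [e']⟩
          · exact ⟨{v, y}, by simp, by simp [e']⟩
        · exact ⟨{v, y}, by simp, by simp [Finset.mem_singleton.1 hz]⟩)
    (by intro X hX Y hY z hzX hzY
        simp only [Finset.mem_insert, Finset.mem_singleton] at hX hY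
        have k1 : ∀ z : V, z ∈ A.erase u → z ∈ ({u, x} : Finset V) → False := by
          intro z h1 h2
          rcases Finset.mem_insert.1 h2 with e | e
          · exact (Finset.mem_erase.1 h1).1 e
          · exact hxA ((Finset.mem_singleton.1 e) ▸ Finset.mem_of_mem_erase h1)
        have k2 : ∀ z : V, z ∈ A.erase u → z ∈ ({v, y} : Finset V) → False := by
          intro z h1 h2
          rcases Finset.mem_insert.1 h2 with e | e
          · exact hvnA (e ▸ Finset.mem_of_mem_erase h1)
          · exact hyA ((Finset.mem_singleton.1 e) ▸ Finset.mem_of_mem_erase h1)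
        have k3 : ∀ z : V, z ∈ ({u, x} : Finset V) → z ∈ ({v, y} : Finset V) → False := by
          intro z h1 h2
          simp only [Finset.mem_insert, Finset.mem_singleton] at h1 h2
          rcases h1 with rfl | rfl <;> rcases h2 with e | e
          · exact huv e
          · exact huy e
          · exact hxv e
          · exact hyx e.symm
        rcases hX with e | e | e <;> rcases hY with e' | e' | e' <;>
          rw [e] at hzX <;> rw [e'] at hzY <;> rw [e, e'] <;>
          first
            | rfl
            | exact (k1 z hzX hzY).elim
            | exact (k1 z hzY hzX).elim
            | exact (k2 z hzX hzY).elim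
            | exact (k2 z hzY hzX).elim
            | exact (k3 z hzX hzY).elim
            | exact (k3 z hzY hzX).elim)
    (by intro X hX a ha b hb
        simp only [Finset.mem_insert, Finset.mem_singleton] at hX
        rcases hX with e | e | e <;> rw [e] at ha hb
        · exact h.2.1 A hA a (Finset.mem_of_mem_erase ha) b (Finset.mem_of_mem_erase hb)
        · simp only [Finset.mem_insert, Finset.mem_singleton] at ha hb
          intro hc
          rcases ha with ea | ea <;> rcases hb with eb | eb <;> rw [ea, eb] at hc
          · exact G.irrefl hc
          · exact hxu hc.symm
          · exact hxu hc
          · exact G.irrefl hc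
        · simp only [Finset.mem_insert, Finset.mem_singleton] at ha hb
          intro hc
          rcases ha with ea | ea <;> rcases hb with eb | eb <;> rw [ea, eb] at hc
          · exact G.irrefl hc
          · exact hvb y hyB hc
          · exact hvb y hyB hc.symm
          · exact G.irrefl hc)
    (by intro X hX
        simp only [Finset.mem_insert, Finset.mem_singleton] at hX
        rcases hX with e | e | e <;> rw [e]
        · right; left; exact hcarde
        · right; left; exact hcardux
        · right; left; exact hcardvy)
    (by intro X hX
        simp only [Finset.mem_insert, Finset.mem_singleton] at hX
        rcases hX with e | e | e <;> rw [e]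
        · exact Finset.card_pos.1 (by rw [hcarde]; norm_num)
        · exact ⟨u, by simp⟩
        · exact ⟨v, by simp⟩)
  have e3 : (({A, B, {v}} : Finset (Finset V)).filter (fun X => X.card = 3)).card = 1 := by
    rw [Finset.filter_insert, if_pos hA3, Finset.filter_insert, if_neg (by omega),
      Finset.filter_singleton, if_neg (by simp)]
    simp
  have e2 : (({A, B, {v}} : Finset (Finset V)).filter (fun X => X.card = 2)).card = 1 := by
    rw [Finset.filter_insert, if_neg (by omega), Finset.filter_insert, if_pos hB2,
      Finset.filter_singleton, if_neg (by simp)]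
    simp
  have e1 : (({A, B, {v}} : Finset (Finset V)).filter (fun X => X.card = 1)).card = 1 := by
    rw [Finset.filter_insert, if_neg (by omega), Finset.filter_insert, if_neg (by omega),
      Finset.filter_singleton, if_pos (by simp)]
    simp
  have f3 : (({A.erase u, {u, x}, {v, y}} : Finset (Finset V)).filter (fun X => X.card = 3)).card = 0 := by
    rw [Finset.filter_insert, if_neg (by omega), Finset.filter_insert, if_neg (by omega),
      Finset.filter_singleton, if_neg (by omega)]
    simp
  have f2 : (({A.erase u, {u, x}, {v, y}} : Finset (Finset V)).filter (fun X => X.card = 2)).card = 3 := by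
    rw [Finset.filter_insert, if_pos hcarde, Finset.filter_insert, if_pos hcardux,
      Finset.filter_singleton, if_pos hcardvy]
    rw [Finset.card_insert_of_notMem (by simp [hne1, hne2]),
      Finset.card_insert_of_notMem (by simp [hne3]), Finset.card_singleton]
  have f1 : (({A.erase u, {u, x}, {v, y}} : Finset (Finset V)).filter (fun X => X.card = 1)).card = 0 := by
    rw [Finset.filter_insert, if_neg (by omega), Finset.filter_insert, if_neg (by omega),
      Finset.filter_singleton, if_neg (by omega)]
    simp
  rw [e3, e2, e1, f3, f2, f1] at hrep
  have er : r + 1 - 1 + 0 = r := by omega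
  have es : s - 1 + 3 = s + 2 := by omega
  have et : t + 1 - 1 + 0 = t := by omega
  rw [er, es, et] at hrep
  exact hno _ hrep


lemma step [DecidableRel G.Adj] (h : IsRST G P (r + 1) s (t + 1))
    (hdeg : 2 * G.maxDegree < Fintype.card V) :
    ∃ Q, IsRST G Q r (s + 2) t := by
  by_contra hno'
  push_neg at hno'
  have hno : ∀ Q : Finset (Finset V), ¬ IsRST G Q r (s + 2) t := hno'
  -- a singleton class {v}
  have ht1 : 0 < (P.filter (fun A => A.card = 1)).card := by rw [h.2.2.2.2.1]; omega
  obtain ⟨S, hS⟩ := Finset.card_pos.1 ht1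
  obtain ⟨hSP, hS1⟩ := Finset.mem_filter.1 hS
  obtain ⟨v, rfl⟩ := Finset.card_eq_one.1 hS1
  -- a triple class A0
  have hr1 : 0 < (P.filter (fun A => A.card = 3)).card := by rw [h.2.2.1]; omega
  obtain ⟨A0, hA0'⟩ := Finset.card_pos.1 hr1
  obtain ⟨hA0, hA03⟩ := Finset.mem_filter.1 hA0'
  obtain ⟨u0, hu0⟩ := Finset.card_pos.1 (by rw [hA03]; norm_num : 0 < A0.card)
  have key : ∀ A ∈ P, A.card ≤ ((G.neighborFinset v) ∩ A).card + ((G.neighborFinset u0) ∩ A).card := by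
    intro A hA
    rcases h.2.2.2.2.2 A hA with h1 | h2 | h3
    · obtain ⟨w, rfl⟩ := Finset.card_eq_one.1 h1
      have hadj : G.Adj w u0 := claim1 hno h hA hA0 hA03 hu0
      have hmem : w ∈ (G.neighborFinset u0) ∩ {w} :=
        Finset.mem_inter.2 ⟨(SimpleGraph.mem_neighborFinset _ _ _).2 hadj.symm, by simp⟩
      have := Finset.card_pos.2 ⟨w, hmem⟩
      omega
    · by_cases hcase : ∀ b ∈ A, ¬ G.Adj u0 b
      · have hall := claimT hno h hSP hA h2 hA0 hA03 hu0 hcase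
        have hsub : A ⊆ G.neighborFinset v := fun b hb =>
          (SimpleGraph.mem_neighborFinset _ _ _).2 (hall b hb)
        have : (G.neighborFinset v ∩ A).card = A.card := by
          rw [Finset.inter_eq_right.2 hsub]
        omega
      · push_neg at hcase
        obtain ⟨b, hb, hadjb⟩ := hcase
        have h1' : 0 < (G.neighborFinset u0 ∩ A).card :=
          Finset.card_pos.2 ⟨b, Finset.mem_inter.2 ⟨(SimpleGraph.mem_neighborFinset _ _ _).2 hadjb, hb⟩⟩
        by_cases hcase2 : ∀ b ∈ A, ¬ G.Adj v b
        · have hall : ∀ x ∈ A, G.Adj x u0 := fun x hx =>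
            claimF4 hno h hSP hA h2 hcase2 hA0 hA03 hu0 hx
          have hsub : A ⊆ G.neighborFinset u0 := fun b hb =>
            (SimpleGraph.mem_neighborFinset _ _ _).2 (hall b hb).symm
          have : (G.neighborFinset u0 ∩ A).card = A.card := by
            rw [Finset.inter_eq_right.2 hsub]
          omega
        · push_neg at hcase2
          obtain ⟨c, hc, hadjc⟩ := hcase2
          have h2' : 0 < (G.neighborFinset v ∩ A).card :=
            Finset.card_pos.2 ⟨c, Finset.mem_inter.2 ⟨(SimpleGraph.mem_neighborFinset _ _ _).2 hadjc, hc⟩⟩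
          omega
    · have hall : ∀ b ∈ A, G.Adj v b := fun b hb => claim1 hno h hSP hA h3 hb
      have hsub : A ⊆ G.neighborFinset v := fun b hb =>
        (SimpleGraph.mem_neighborFinset _ _ _).2 (hall b hb)
      have : (G.neighborFinset v ∩ A).card = A.card := by
        rw [Finset.inter_eq_right.2 hsub]
      omega
  have hsumV : Fintype.card V = ∑ A ∈ P, A.card := by
    have := h.card_eq_sum Finset.univ
    simpa using this
  have hdv := h.card_eq_sum (G.neighborFinset v)
  have hdu := h.card_eq_sum (G.neighborFinset u0)
  have hsum_le : ∑ A ∈ P, A.card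
      ≤ ∑ A ∈ P, (((G.neighborFinset v) ∩ A).card + ((G.neighborFinset u0) ∩ A).card) :=
    Finset.sum_le_sum key
  rw [Finset.sum_add_distrib, ← hdv, ← hdu] at hsum_le
  have hd1 : (G.neighborFinset v).card ≤ G.maxDegree := by
    rw [SimpleGraph.card_neighborFinset_eq_degree]
    exact G.degree_le_maxDegree v
  have hd2 : (G.neighborFinset u0).card ≤ G.maxDegree := by
    rw [SimpleGraph.card_neighborFinset_eq_degree]
    exact G.degree_le_maxDegree u0
  omega


lemma descend [DecidableRel G.Adj] (hdeg : 2 * G.maxDegree < Fintype.card V) :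
    ∀ (t r s : ℕ) (P : Finset (Finset V)), IsRST G P r s t →
      2 * (r + s + t) < Fintype.card V →
      ∃ Q r' s', IsRST G Q r' s' 0 ∧ r' + s' = r + s + t := by
  intro t
  induction t with
  | zero => exact fun r s P h _ => ⟨P, r, s, h, rfl⟩
  | succ t ih =>
    intro r s P h hlt
    have hn := h.card_V
    match r, h with
    | 0, h => omega
    | r + 1, h =>
      obtain ⟨Q, hQ⟩ := step h hdeg
      obtain ⟨Q', r', s', hQ', hsum⟩ := ih r (s + 2) Q hQ (by omega)
      exact ⟨Q', r', s', hQ', by omega⟩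

lemma build_eq [DecidableRel G.Adj] {Q : Finset (Finset V)} {r' s' k : ℕ}
    (hQ : IsRST G Q r' s' 0) (hk : r' + s' = k) : EqColorable G k := by
  have hQcard : Q.card = k := by rw [hQ.card_P]; omega
  have hcard : Fintype.card {A // A ∈ Q} = k := by rw [Fintype.card_coe]; exact hQcard
  let e : {A // A ∈ Q} ≃ Fin k := Fintype.equivFinOfCardEq hcard
  have hchoose_mem : ∀ v : V, Q.choose (v ∈ ·) (hQ.1 v) ∈ Q := fun v =>
    Finset.choose_mem (fun A => v ∈ A) Q (hQ.1 v)
  have hchoose_prop : ∀ v : V, v ∈ Q.choose (v ∈ ·) (hQ.1 v) := fun v =>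
    Finset.choose_property (fun A => v ∈ A) Q (hQ.1 v)
  refine ⟨fun v => e ⟨Q.choose (v ∈ ·) (hQ.1 v), hchoose_mem v⟩, ?_, ?_⟩
  · intro u w hadj heq
    have h2 := e.injective heq
    have h3 : Q.choose (u ∈ ·) (hQ.1 u) = Q.choose (w ∈ ·) (hQ.1 w) := congrArg Subtype.val h2
    exact hQ.2.1 _ (hchoose_mem u) u (hchoose_prop u) w (h3 ▸ hchoose_prop w) hadj
  · -- each color class is a class of Q, with card 2 or 3
    have hclass : ∀ i : Fin k,
        (Finset.univ.filter fun v => e ⟨Q.choose (v ∈ ·) (hQ.1 v), hchoose_mem v⟩ = i)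
          = ((e.symm i : {A // A ∈ Q}) : Finset V) := by
      intro i
      ext z
      simp only [Finset.mem_filter, Finset.mem_univ, true_and]
      constructor
      · intro hz
        have : (⟨Q.choose (z ∈ ·) (hQ.1 z), hchoose_mem z⟩ : {A // A ∈ Q}) = e.symm i := by
          rw [← hz]; exact (e.symm_apply_apply _).symm
        have h4 : Q.choose (z ∈ ·) (hQ.1 z) = ((e.symm i : {A // A ∈ Q}) : Finset V) :=
          congrArg Subtype.val this
        rw [← h4]; exact hchoose_prop z
      · intro hz
        have h4 : Q.choose (z ∈ ·) (hQ.1 z) = ((e.symm i : {A // A ∈ Q}) : Finset V) :=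
          hQ.mem_unique (hchoose_mem z) (e.symm i).2 (hchoose_prop z) hz
        have : (⟨Q.choose (z ∈ ·) (hQ.1 z), hchoose_mem z⟩ : {A // A ∈ Q}) = e.symm i :=
          Subtype.ext h4
        rw [this, e.apply_symm_apply]
    have hsize : ∀ A ∈ Q, 2 ≤ A.card ∧ A.card ≤ 3 := by
      intro A hA
      rcases hQ.2.2.2.2.2 A hA with h1 | h2 | h3
      · exfalso
        have : A ∈ Q.filter (fun X => X.card = 1) := Finset.mem_filter.2 ⟨hA, h1⟩
        have h5 := Finset.card_pos.2 ⟨A, this⟩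
        rw [hQ.2.2.2.2.1] at h5
        omega
      · omega
      · omega
    intro i j
    rw [hclass i, hclass j]
    have h1 := hsize _ (e.symm i).2
    have h2 := hsize _ (e.symm j).2
    omega


end aux

theorem stmt1 [Fintype V] [DecidableEq V] (G : SimpleGraph V) [DecidableRel G.Adj]
    (P : Finset (Finset V)) (r s t : ℕ)
    (hP : IsRST G P r s t)
    (hΔ : 2 * G.maxDegree < Fintype.card V)
    (hle : r + s + t ≤ G.maxDegree) :
    EqColorable G (r + s + t) := by
  have h2k : 2 * (r + s + t) < Fintype.card V := by
    have := G.maxDegree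
    omega
  obtain ⟨Q, r', s', hQ, hsum⟩ := descend hΔ t r s P hP h2k
  exact build_eq hQ hsum
end

section
/- In any maximal [r,s,t]-coloring of a graph G, every singleton-class vertex w has at least one neighbor in every color class of size 2. -/
open Finset

variable {V : Type*}

/-!
If a singleton class `{w}` had no neighbour in a class `U` of size 2, then `{w} ∪ U` would be an
independent set of size 3. Replacing the two classes `{w}` and `U` by their union yields a coloring
with one more class of size 3, contradicting maximality.
-/

section MergeClasses

variable [DecidableEq V]

def mergeClasses (P : Finset (Finset V)) (A U : Finset V) : Finset (Finset V) :=
  insert (A ∪ U) ((P.erase A).erase U)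

variable {P : Finset (Finset V)} {A U : Finset V}

theorem mem_mergeClasses {C : Finset V} :
    C ∈ mergeClasses P A U ↔ C = A ∪ U ∨ (C ∈ P ∧ C ≠ A ∧ C ≠ U) := by
  simp only [mergeClasses, mem_insert, mem_erase]
  tauto

theorem existsUnique_mem_mergeClasses (hP : ∀ v, ∃! C, C ∈ P ∧ v ∈ C) (hA : A ∈ P)
    (hU : U ∈ P) (v : V) : ∃! C, C ∈ mergeClasses P A U ∧ v ∈ C := by
  obtain ⟨C, ⟨hC, hvC⟩, -⟩ := hP v
  by_cases hvAU : v ∈ A ∪ U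
  · refine ⟨A ∪ U, ⟨mem_mergeClasses.2 (Or.inl rfl), hvAU⟩, ?_⟩
    rintro D ⟨hD, hvD⟩
    rcases mem_mergeClasses.1 hD with rfl | ⟨hDP, hDA, hDU⟩
    · rfl
    · rcases mem_union.1 hvAU with hvA | hvU
      · exact absurd ((hP v).unique ⟨hDP, hvD⟩ ⟨hA, hvA⟩) hDA
      · exact absurd ((hP v).unique ⟨hDP, hvD⟩ ⟨hU, hvU⟩) hDU
  · have hCA : C ≠ A := by rintro rfl; exact hvAU (mem_union_left _ hvC)
    have hCU : C ≠ U := by rintro rfl; exact hvAU (mem_union_right _ hvC)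
    refine ⟨C, ⟨mem_mergeClasses.2 (Or.inr ⟨hC, hCA, hCU⟩), hvC⟩, ?_⟩
    rintro D ⟨hD, hvD⟩
    rcases mem_mergeClasses.1 hD with rfl | ⟨hDP, -, -⟩
    · exact absurd hvD hvAU
    · exact (hP v).unique ⟨hDP, hvD⟩ ⟨hC, hvC⟩

theorem not_adj_of_mem_mergeClasses (G : SimpleGraph V) (hA : A ∈ P) (hU : U ∈ P)
    (hind : ∀ C ∈ P, ∀ u ∈ C, ∀ w ∈ C, ¬ G.Adj u w)
    (hAU : ∀ a ∈ A, ∀ u ∈ U, ¬ G.Adj a u) :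
    ∀ C ∈ mergeClasses P A U, ∀ u ∈ C, ∀ w ∈ C, ¬ G.Adj u w := by
  intro C hC
  rcases mem_mergeClasses.1 hC with rfl | ⟨hCP, -, -⟩
  · intro u hu w hw
    rcases mem_union.1 hu with hu | hu <;> rcases mem_union.1 hw with hw | hw
    · exact hind A hA u hu w hw
    · exact hAU u hu w hw
    · exact fun h => hAU w hw u hu h.symm
    · exact hind U hU u hu w hw
  · exact hind C hCP

theorem card_filter_mergeClasses (p : Finset V → Prop) [DecidablePred p] (hpA : ¬ p A)
    (hpU : ¬ p U) (hpAU : p (A ∪ U)) (hAU : A ∪ U ∉ P) :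
    #((mergeClasses P A U).filter p) = #(P.filter p) + 1 := by
  have hA : A ∉ P.filter p := fun h => hpA (mem_filter.1 h).2
  have hU : U ∉ P.filter p := fun h => hpU (mem_filter.1 h).2
  have hAU' : A ∪ U ∉ P.filter p := fun h => hAU (mem_filter.1 h).1
  rw [mergeClasses, filter_insert, if_pos hpAU, filter_erase, filter_erase,
    erase_eq_of_notMem hA, erase_eq_of_notMem hU, card_insert_of_notMem hAU']

theorem IsRST.exists_mergeClasses [Fintype V] {G : SimpleGraph V} {r s t : ℕ}
    (hP : IsRST G P r s t) (hA : A ∈ P) (hU : U ∈ P) (hAU : ∀ a ∈ A, ∀ u ∈ U, ¬ G.Adj a u)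
    (hA3 : A.card ≠ 3) (hU3 : U.card ≠ 3) (hcard : (A ∪ U).card = 3) :
    ∃ s' t', IsRST G (mergeClasses P A U) (r + 1) s' t' := by
  obtain ⟨hpart, hind, hr, -, -, hsize⟩ := hP
  have hnotMem : A ∪ U ∉ P := fun hAUP => by
    obtain ⟨a, ha⟩ : A.Nonempty := card_pos.1 (by rcases hsize A hA with h | h | h <;> omega)
    have hAUA := (hpart a).unique ⟨hAUP, mem_union_left _ ha⟩ ⟨hA, ha⟩
    exact hA3 (hAUA ▸ hcard)
  refine ⟨_, _, existsUnique_mem_mergeClasses hpart hA hU,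
    not_adj_of_mem_mergeClasses G hA hU hind hAU, ?_, rfl, rfl, fun C hC => ?_⟩
  · rw [card_filter_mergeClasses (·.card = 3) hA3 hU3 hcard hnotMem, hr]
  · rcases mem_mergeClasses.1 hC with rfl | ⟨hCP, -, -⟩
    exacts [Or.inr (Or.inr hcard), hsize C hCP]

end MergeClasses

theorem stmt5 [Fintype V] [DecidableEq V] (G : SimpleGraph V)
    (P : Finset (Finset V)) (r s t : ℕ)
    (h : IsMaxRST G P r s t) :
    ∀ A ∈ P, A.card = 1 → ∀ w ∈ A, ∀ U ∈ P, U.card = 2 →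
      ∃ u ∈ U, G.Adj w u := by
  intro A hA hA1 w hw U hU hU2
  by_contra! hno
  obtain ⟨hP, hmax⟩ := h
  have hdisj : Disjoint A U := disjoint_left.2 fun v hvA hvU => by
    have hAU := (hP.1 v).unique ⟨hA, hvA⟩ ⟨hU, hvU⟩
    subst hAU
    omega
  have hcard : (A ∪ U).card = 3 := by rw [card_union_of_disjoint hdisj, hA1, hU2]
  have hnoAdj : ∀ a ∈ A, ∀ u ∈ U, ¬ G.Adj a u := fun a ha =>
    card_le_one.1 hA1.le a ha w hw ▸ hno
  obtain ⟨s', t', hcol⟩ := hP.exists_mergeClasses hA hU hnoAdj (by omega) (by omega) hcard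
  rcases hmax _ _ _ _ hcol with h3 | ⟨h3, -⟩ <;> omega
end

section
/- In a maximal [r,s,t]-coloring of a graph G, if a singleton-class vertex w_k has exactly one neighbor u_j in a size-2 class U_j = {u_j, v_j}, then every singleton-class vertex w_{k'} is adjacent to u_j. -/
open Finset

variable {V : Type*}

/-! If `w'` were not adjacent to `u`, replacing the classes `{w}`, `{u, v}`, `{w'}` by `{v, w}` and
`{u, w'}` would give a coloring with as many classes of size 3 and one more class of size 2,
contradicting maximality; `{v, w}` is independent because `u` is the only neighbour of `w` in
`{u, v}`. -/

theorem Finset.exists_eq_pair_of_card_eq_two {α : Type*} [DecidableEq α] {U : Finset α} {u : α}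
    (hU2 : U.card = 2) (hu : u ∈ U) : ∃ v, u ≠ v ∧ U = {u, v} := by
  obtain ⟨v, hv⟩ := card_eq_one.1 (by rw [card_erase_of_mem hu, hU2] : (U.erase u).card = 1)
  exact ⟨v, (ne_of_mem_erase (hv ▸ mem_singleton_self v)).symm, by rw [← insert_erase hu, hv]⟩

theorem Finset.card_filter_sdiff_union_add {α : Type*} [DecidableEq α] (p : α → Prop)
    [DecidablePred p] {P S T : Finset α} (hSP : S ⊆ P) (hdisj : Disjoint (P \ S) T) :
    #{A ∈ P \ S ∪ T | p A} + #{A ∈ S | p A} = #{A ∈ P | p A} + #{A ∈ T | p A} := by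
  have hP : #{A ∈ P | p A} = #{A ∈ P \ S | p A} + #{A ∈ S | p A} := by
    rw [← card_union_of_disjoint (disjoint_filter_filter sdiff_disjoint), ← filter_union,
      sdiff_union_of_subset hSP]
  rw [hP, filter_union, card_union_of_disjoint (disjoint_filter_filter hdisj)]
  ring

namespace IsRST

variable [Fintype V] [DecidableEq V] {G : SimpleGraph V} {P S T : Finset (Finset V)} {r s t : ℕ}

theorem eq_of_mem (hP : IsRST G P r s t) {A B : Finset V} {v : V} (hA : A ∈ P) (hB : B ∈ P)
    (hvA : v ∈ A) (hvB : v ∈ B) : A = B :=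
  (hP.1 v).unique ⟨hA, hvA⟩ ⟨hB, hvB⟩

theorem notMem_of_singleton_mem (hP : IsRST G P r s t) {U : Finset V} {w : V}
    (hw : {w} ∈ P) (hU : U ∈ P) (hU2 : U.card = 2) : w ∉ U := by
  intro hwU
  simp [← hP.eq_of_mem hw hU (mem_singleton_self w) hwU] at hU2

theorem mem_of_mem_biUnion (hP : IsRST G P r s t) (hSP : S ⊆ P) {A : Finset V} {v : V}
    (hA : A ∈ P) (hvA : v ∈ A) (hv : v ∈ S.biUnion id) : A ∈ S := by
  obtain ⟨A', hA'S, hvA'⟩ := mem_biUnion.1 hv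
  rwa [hP.eq_of_mem hA (hSP hA'S) hvA hvA']

theorem disjoint_sdiff_of_biUnion_eq (hP : IsRST G P r s t) (hSP : S ⊆ P)
    (hcover : S.biUnion id = T.biUnion id) (hTne : ∀ B ∈ T, B.Nonempty) :
    Disjoint (P \ S) T := by
  refine disjoint_left.2 fun B hBPS hBT ↦ ?_
  obtain ⟨hBP, hBS⟩ := mem_sdiff.1 hBPS
  obtain ⟨v, hvB⟩ := hTne B hBT
  exact hBS (hP.mem_of_mem_biUnion hSP hBP hvB (hcover ▸ mem_biUnion.2 ⟨B, hBT, hvB⟩))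

theorem existsUnique_mem_sdiff_union (hP : IsRST G P r s t) (hSP : S ⊆ P)
    (hcover : S.biUnion id = T.biUnion id) (hT : (T : Set (Finset V)).PairwiseDisjoint id)
    (v : V) : ∃! B, B ∈ P \ S ∪ T ∧ v ∈ B := by
  obtain ⟨A, ⟨hA, hvA⟩, -⟩ := hP.1 v
  by_cases hAS : A ∈ S
  · obtain ⟨B, hBT, hvB⟩ : ∃ B ∈ T, v ∈ B :=
      mem_biUnion.1 (hcover ▸ mem_biUnion.2 ⟨A, hAS, hvA⟩)
    refine ⟨B, ⟨mem_union_right _ hBT, hvB⟩, fun C ⟨hC, hvC⟩ ↦ ?_⟩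
    rcases mem_union.1 hC with hC | hCT
    · obtain ⟨hCP, hCS⟩ := mem_sdiff.1 hC
      exact absurd (hP.eq_of_mem hA hCP hvA hvC ▸ hAS) hCS
    · exact hT.elim_finset hCT hBT v hvC hvB
  · refine ⟨A, ⟨mem_union_left _ (mem_sdiff.2 ⟨hA, hAS⟩), hvA⟩, fun C ⟨hC, hvC⟩ ↦ ?_⟩
    rcases mem_union.1 hC with hC | hCT
    · exact hP.eq_of_mem (mem_sdiff.1 hC).1 hA hvC hvA
    · exact absurd (hP.mem_of_mem_biUnion hSP hA hvA
        (hcover ▸ mem_biUnion.2 ⟨C, hCT, hvC⟩)) hAS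

theorem exists_sdiff_union (hP : IsRST G P r s t) (hSP : S ⊆ P)
    (hcover : S.biUnion id = T.biUnion id) (hT : (T : Set (Finset V)).PairwiseDisjoint id)
    (hTind : ∀ B ∈ T, ∀ u ∈ B, ∀ w ∈ B, ¬ G.Adj u w)
    (hTsz : ∀ B ∈ T, B.card = 1 ∨ B.card = 2 ∨ B.card = 3) {r' s' : ℕ}
    (hr : r' + #{A ∈ S | A.card = 3} = r + #{A ∈ T | A.card = 3})
    (hs : s' + #{A ∈ S | A.card = 2} = s + #{A ∈ T | A.card = 2}) :
    ∃ t', IsRST G (P \ S ∪ T) r' s' t' := by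
  have hdisj := hP.disjoint_sdiff_of_biUnion_eq hSP hcover fun B hB ↦
    card_pos.1 (by rcases hTsz B hB with h | h | h <;> omega)
  have h3 := card_filter_sdiff_union_add (·.card = 3) hSP hdisj
  have h2 := card_filter_sdiff_union_add (·.card = 2) hSP hdisj
  have hr3 := hP.2.2.1
  have hs2 := hP.2.2.2.1
  refine ⟨_, hP.existsUnique_mem_sdiff_union hSP hcover hT, fun B hB ↦ ?_, by omega, by omega,
    rfl, fun B hB ↦ ?_⟩ <;> rcases mem_union.1 hB with hB | hBT
  · exact hP.2.1 B (mem_sdiff.1 hB).1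
  · exact hTind B hBT
  · exact hP.2.2.2.2.2 B (mem_sdiff.1 hB).1
  · exact hTsz B hBT

theorem exists_succ_s6 (hP : IsRST G P r s t) {u v w w' : V}
    (hw : {w} ∈ P) (hw' : {w'} ∈ P) (hU : {u, v} ∈ P) (huv : u ≠ v) (hww' : w ≠ w')
    (hwv : ¬ G.Adj w v) (hw'u : ¬ G.Adj w' u) : ∃ P' t', IsRST G P' r (s + 1) t' := by
  have hU2 : ({u, v} : Finset V).card = 2 := card_pair huv
  have hwU := hP.notMem_of_singleton_mem hw hU hU2
  have hw'U := hP.notMem_of_singleton_mem hw' hU hU2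
  simp only [mem_insert, mem_singleton, not_or] at hwU hw'U
  have hX : ({v, w} : Finset V).card = 2 := card_pair (Ne.symm hwU.2)
  have hY : ({u, w'} : Finset V).card = 2 := card_pair (Ne.symm hw'U.1)
  have hXY : Disjoint ({v, w} : Finset V) {u, w'} := by
    simp [huv, hw'U.2, Ne.symm hww', Ne.symm hwU.1]
  set S : Finset (Finset V) := {{w}, {u, v}, {w'}}
  set T : Finset (Finset V) := {{v, w}, {u, w'}}
  have hSP : S ⊆ P := by simp [S, insert_subset_iff, hw, hw', hU]
  have hcover : S.biUnion id = T.biUnion id := by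
    ext x
    simp [S, T]
  have hT : (T : Set (Finset V)).PairwiseDisjoint id := by
    rw [coe_pair]
    exact (Set.pairwiseDisjoint_singleton _ _).insert fun Y hY _ ↦ Set.mem_singleton_iff.1 hY ▸ hXY
  have hTind : ∀ B ∈ T, ∀ a ∈ B, ∀ b ∈ B, ¬ G.Adj a b := by
    have hvw : ¬ G.Adj v w := fun h ↦ hwv h.symm
    have huw' : ¬ G.Adj u w' := fun h ↦ hw'u h.symm
    simp [T, hwv, hvw, hw'u, huw']
  have hT2 : #{A ∈ T | A.card = 2} = 2 := by
    rw [filter_true_of_mem (by simp [T, hX, hY]), card_pair]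
    exact ne_of_mem_of_not_mem' (mem_insert_self v _) (disjoint_left.1 hXY (mem_insert_self v _))
  exact ⟨_, hP.exists_sdiff_union (r' := r) (s' := s + 1) hSP hcover hT hTind
    (by simp [T, hX, hY]) (by simp [S, T, filter_insert, filter_singleton, hU2, hX, hY])
    (by simp [S, filter_insert, filter_singleton, hU2, hT2])⟩

end IsRST

theorem eB_singleton_left [Fintype V] [DecidableEq V] (G : SimpleGraph V) [DecidableRel G.Adj]
    (w : V) (U : Finset V) : eB G {w} U = #{x ∈ U | G.Adj w x} := by
  rw [eB, singleton_product, filter_map, card_map]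
  rfl

theorem eq_of_adj_of_eB_singleton_le_one [Fintype V] [DecidableEq V] {G : SimpleGraph V}
    [DecidableRel G.Adj] {w u v : V} {U : Finset V} (hone : eB G {w} U ≤ 1) (hu : u ∈ U)
    (hv : v ∈ U) (hwu : G.Adj w u) (hwv : G.Adj w v) : u = v := by
  rw [eB_singleton_left] at hone
  exact card_le_one.1 hone u (mem_filter.2 ⟨hu, hwu⟩) v (mem_filter.2 ⟨hv, hwv⟩)

theorem IsMaxRST.not_isRST_succ [Fintype V] [DecidableEq V] {G : SimpleGraph V}
    {P : Finset (Finset V)} {r s t : ℕ} (h : IsMaxRST G P r s t) (P' : Finset (Finset V))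
    (t' : ℕ) : ¬ IsRST G P' r (s + 1) t' := fun h' ↦ by
  rcases h.2 P' r (s + 1) t' h' with h | ⟨-, h⟩ <;> omega

theorem stmt6 [Fintype V] [DecidableEq V] (G : SimpleGraph V) [DecidableRel G.Adj]
    (P : Finset (Finset V)) (r s t : ℕ)
    (h : IsMaxRST G P r s t)
    (A U : Finset V) (w u : V)
    (hA : A ∈ P) (hAw : A = {w})
    (hU : U ∈ P) (hU2 : U.card = 2) (hu : u ∈ U)
    (hadj : G.Adj w u) (hone : eB G {w} U = 1) :
    ∀ B ∈ P, B.card = 1 → ∀ w' ∈ B, G.Adj w' u := by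
  intro B hB hB1 w' hw'
  by_contra hw'u
  obtain ⟨v, huv, rfl⟩ := exists_eq_pair_of_card_eq_two hU2 hu
  obtain ⟨b, rfl⟩ := card_eq_one.1 hB1
  obtain rfl := mem_singleton.1 hw'
  subst hAw
  have hwv : ¬ G.Adj w v := fun hwv ↦
    huv (eq_of_adj_of_eB_singleton_le_one hone.le hu (by simp) hadj hwv)
  obtain ⟨P', t', hP'⟩ :=
    h.1.exists_succ_s6 hA hB hU huv (fun h ↦ hw'u (h ▸ hadj)) hwv hw'u
  exact h.not_isRST_succ P' t' hP'
end

section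
/- In a maximal [r,s,t]-coloring of a graph G, for any two distinct singleton-class vertices w_k, w_{k'} and any size-3 color class X_i, the number of edges between {w_k, w_{k'}} and X_i is at least 2; moreover if it equals 2, then each of w_k and w_{k'} has exactly one neighbor in X_i. -/
open Finset

variable {V : Type*}

lemma eB_singleton [Fintype V] [DecidableEq V] (G : SimpleGraph V) [DecidableRel G.Adj]
    (w : V) (X : Finset V) : eB G {w} X = (X.filter (fun y => G.Adj w y)).card := by
  unfold eB
  rw [Finset.singleton_product, Finset.filter_map, Finset.card_map]
  rfl

lemma eB_pair [Fintype V] [DecidableEq V] (G : SimpleGraph V) [DecidableRel G.Adj]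
    (w w' : V) (hww' : w ≠ w') (X : Finset V) :
    eB G {w, w'} X = eB G {w} X + eB G {w'} X := by
  have : ({w, w'} : Finset V) = {w} ∪ {w'} := rfl
  rw [this]
  unfold eB
  rw [Finset.union_product, Finset.filter_union, Finset.card_union_of_disjoint]
  refine Finset.disjoint_left.2 ?_
  rintro ⟨a, b⟩ h1 h2
  simp only [Finset.mem_filter, Finset.mem_product, Finset.mem_singleton] at h1 h2
  exact hww' (h1.1.1.symm ▸ h2.1.1)

lemma swap_contra [Fintype V] [DecidableEq V] (G : SimpleGraph V) [DecidableRel G.Adj]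
    (P : Finset (Finset V)) (r s t : ℕ) (h : IsMaxRST G P r s t)
    (A B X : Finset V) (w w' x : V)
    (hA : A ∈ P) (hAw : A = {w}) (hB : B ∈ P) (hBw : B = {w'}) (hAB : A ≠ B)
    (hX : X ∈ P) (hX3 : X.card = 3)
    (hwX : ∀ y ∈ X, ¬ G.Adj w y) (hx : x ∈ X) (hw'x : ¬ G.Adj w' x) : False := by
  obtain ⟨⟨huniq, hind, hr, hs, ht, hcard⟩, hmax⟩ := h
  subst hAw hBw
  have hww' : w ≠ w' := fun e => hAB (by rw [e])
  have hwnX : w ∉ X := by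
    intro hw
    have e1 : ({w} : Finset V) = X := (huniq w).unique ⟨hA, mem_singleton_self w⟩ ⟨hX, hw⟩
    rw [← e1] at hX3; simp at hX3
  have hw'nX : w' ∉ X := by
    intro hw
    have e1 : ({w'} : Finset V) = X := (huniq w').unique ⟨hB, mem_singleton_self w'⟩ ⟨hX, hw⟩
    rw [← e1] at hX3; simp at hX3
  have hxw : x ≠ w := fun e => hwnX (e ▸ hx)
  have hxw' : x ≠ w' := fun e => hw'nX (e ▸ hx)
  set X' : Finset V := insert w (X.erase x) with hX'
  set Y' : Finset V := {w', x} with hY'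
  set Q : Finset (Finset V) := ((P.erase ({w} : Finset V)).erase {w'}).erase X with hQ
  set P' : Finset (Finset V) := insert X' (insert Y' Q) with hP'
  have hwX' : w ∈ X' := mem_insert_self _ _
  have hw'Y' : w' ∈ Y' := mem_insert_self _ _
  have hX'card : X'.card = 3 := by
    rw [hX', card_insert_of_notMem (fun hc => hwnX (mem_of_mem_erase hc)),
      card_erase_of_mem hx, hX3]
  have hY'card : Y'.card = 2 := by
    rw [hY', card_insert_of_notMem (by simp [Ne.symm hxw']), card_singleton]
  have hX'nP : X' ∉ P := by
    intro hc
    have e1 : X' = ({w} : Finset V) := (huniq w).unique ⟨hc, hwX'⟩ ⟨hA, mem_singleton_self w⟩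
    rw [e1] at hX'card; simp at hX'card
  have hY'nP : Y' ∉ P := by
    intro hc
    have e1 : Y' = ({w'} : Finset V) := (huniq w').unique ⟨hc, hw'Y'⟩ ⟨hB, mem_singleton_self w'⟩
    rw [e1] at hY'card; simp at hY'card
  have hQsub : ∀ {C}, C ∈ Q → C ∈ P := fun hc =>
    mem_of_mem_erase (mem_of_mem_erase (mem_of_mem_erase hc))
  have hmemQ : ∀ {C}, C ∈ Q ↔ C ∈ P ∧ C ≠ ({w} : Finset V) ∧ C ≠ ({w'} : Finset V) ∧ C ≠ X := by
    intro C
    simp only [hQ, mem_erase]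
    tauto
  have hmemP' : ∀ {C}, C ∈ P' ↔ C = X' ∨ C = Y' ∨ C ∈ Q := by
    intro C; simp only [hP', mem_insert]
  have hRST : IsRST G P' r (s + 1) ((P'.filter (fun A => A.card = 1)).card) := by
    refine ⟨?_, ?_, ?_, ?_, rfl, ?_⟩
    · -- partition
      intro v
      by_cases hv : v = w
      · refine ⟨X', ⟨hmemP'.2 (Or.inl rfl), by rw [hv]; exact hwX'⟩, ?_⟩
        rintro D ⟨hD, hvD⟩
        rw [hv] at hvD
        rcases hmemP'.1 hD with e | e | e
        · exact e
        · exfalso; rw [e, hY'] at hvD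
          rcases mem_insert.1 hvD with e2 | e2
          · exact hww' e2
          · exact hxw (mem_singleton.1 e2).symm
        · exfalso
          exact (hmemQ.1 e).2.1 ((huniq w).unique ⟨hQsub e, hvD⟩ ⟨hA, mem_singleton_self w⟩)
      by_cases hv' : v = w'
      · refine ⟨Y', ⟨hmemP'.2 (Or.inr (Or.inl rfl)), by rw [hv']; exact hw'Y'⟩, ?_⟩
        rintro D ⟨hD, hvD⟩
        rw [hv'] at hvD
        rcases hmemP'.1 hD with e | e | e
        · exfalso; rw [e, hX'] at hvD
          rcases mem_insert.1 hvD with e2 | e2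
          · exact hww' e2.symm
          · exact hw'nX (mem_of_mem_erase e2)
        · exact e
        · exfalso
          exact (hmemQ.1 e).2.2.1 ((huniq w').unique ⟨hQsub e, hvD⟩ ⟨hB, mem_singleton_self w'⟩)
      by_cases hvx : v = x
      · refine ⟨Y', ⟨hmemP'.2 (Or.inr (Or.inl rfl)), by rw [hvx, hY']; simp⟩, ?_⟩
        rintro D ⟨hD, hvD⟩
        rw [hvx] at hvD
        rcases hmemP'.1 hD with e | e | e
        · exfalso; rw [e, hX'] at hvD
          rcases mem_insert.1 hvD with e2 | e2
          · exact hxw e2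
          · exact (mem_erase.1 e2).1 rfl
        · exact e
        · exfalso
          exact (hmemQ.1 e).2.2.2 ((huniq x).unique ⟨hQsub e, hvD⟩ ⟨hX, hx⟩)
      by_cases hvX : v ∈ X
      · refine ⟨X', ⟨hmemP'.2 (Or.inl rfl), mem_insert_of_mem (mem_erase.2 ⟨hvx, hvX⟩)⟩, ?_⟩
        rintro D ⟨hD, hvD⟩
        rcases hmemP'.1 hD with e | e | e
        · exact e
        · exfalso; rw [e, hY'] at hvD
          rcases mem_insert.1 hvD with e2 | e2
          · exact hv' e2
          · exact hvx (mem_singleton.1 e2)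
        · exfalso
          exact (hmemQ.1 e).2.2.2 ((huniq v).unique ⟨hQsub e, hvD⟩ ⟨hX, hvX⟩)
      · obtain ⟨C, ⟨hCP, hvC⟩, hCu⟩ := huniq v
        have hCA : C ≠ ({w} : Finset V) := by rintro rfl; exact hv (mem_singleton.1 hvC)
        have hCB : C ≠ ({w'} : Finset V) := by rintro rfl; exact hv' (mem_singleton.1 hvC)
        have hCX : C ≠ X := by rintro rfl; exact hvX hvC
        refine ⟨C, ⟨hmemP'.2 (Or.inr (Or.inr (hmemQ.2 ⟨hCP, hCA, hCB, hCX⟩))), hvC⟩, ?_⟩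
        rintro D ⟨hD, hvD⟩
        rcases hmemP'.1 hD with e | e | e
        · exfalso; rw [e, hX'] at hvD
          rcases mem_insert.1 hvD with e2 | e2
          · exact hv e2
          · exact hvX (mem_of_mem_erase e2)
        · exfalso; rw [e, hY'] at hvD
          rcases mem_insert.1 hvD with e2 | e2
          · exact hv' e2
          · exact hvx (mem_singleton.1 e2)
        · exact hCu D ⟨hQsub e, hvD⟩
    · -- independence
      intro C hC u hu v hv
      rcases hmemP'.1 hC with e | e | e
      · rw [e, hX'] at hu hv
        rcases mem_insert.1 hu with e1 | e1 <;> rcases mem_insert.1 hv with e2 | e2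
        · rw [e1, e2]; exact G.irrefl
        · rw [e1]; exact hwX v (mem_of_mem_erase e2)
        · rw [e2]; intro hadj; exact hwX u (mem_of_mem_erase e1) hadj.symm
        · exact hind X hX u (mem_of_mem_erase e1) v (mem_of_mem_erase e2)
      · rw [e, hY'] at hu hv
        rcases mem_insert.1 hu with e1 | e1 <;> rcases mem_insert.1 hv with e2 | e2
        · rw [e1, e2]; exact G.irrefl
        · rw [e1, mem_singleton.1 e2]; exact hw'x
        · rw [mem_singleton.1 e1, e2]; intro hadj; exact hw'x hadj.symm
        · rw [mem_singleton.1 e1, mem_singleton.1 e2]; exact G.irrefl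
      · exact hind C (hQsub e) u hu v hv
    · -- count of triples
      have hQ3 : Q.filter (fun A => A.card = 3) = (P.filter (fun A => A.card = 3)).erase X := by
        ext C
        simp only [mem_filter, mem_erase, hmemQ]
        constructor
        · rintro ⟨⟨h1, h2, h3, h4⟩, h5⟩; exact ⟨h4, h1, h5⟩
        · rintro ⟨h4, h1, h5⟩
          refine ⟨⟨h1, ?_, ?_, h4⟩, h5⟩ <;> (rintro rfl; simp at h5)
      have hXmem : X ∈ P.filter (fun A => A.card = 3) := mem_filter.2 ⟨hX, hX3⟩
      have he : P'.filter (fun A => A.card = 3) = insert X' (Q.filter (fun A => A.card = 3)) := by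
        rw [hP', filter_insert, if_pos hX'card, filter_insert, if_neg (by rw [hY'card]; omega)]
      rw [he, card_insert_of_notMem (fun hc => hX'nP (hQsub (mem_filter.1 hc).1)), hQ3,
        card_erase_of_mem hXmem, hr]
      have : 1 ≤ r := hr ▸ card_pos.2 ⟨X, hXmem⟩
      omega
    · -- count of pairs
      have hQ2 : Q.filter (fun A => A.card = 2) = P.filter (fun A => A.card = 2) := by
        ext C
        simp only [mem_filter, hmemQ]
        constructor
        · rintro ⟨⟨h1, h2, h3, h4⟩, h5⟩; exact ⟨h1, h5⟩
        · rintro ⟨h1, h5⟩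
          have h4 : C ≠ X := by rintro rfl; omega
          refine ⟨⟨h1, ?_, ?_, h4⟩, h5⟩ <;> (rintro rfl; simp at h5)
      have he : P'.filter (fun A => A.card = 2) = insert Y' (Q.filter (fun A => A.card = 2)) := by
        rw [hP', filter_insert, if_neg (by rw [hX'card]; omega), filter_insert, if_pos hY'card]
      rw [he, hQ2, card_insert_of_notMem (fun hc => hY'nP (mem_filter.1 hc).1), hs]
    · intro C hC
      rcases hmemP'.1 hC with e | e | e
      · rw [e, hX'card]; tauto
      · rw [e, hY'card]; tauto
      · exact hcard C (hQsub e)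
  rcases hmax P' r (s + 1) _ hRST with hlt | ⟨_, hle⟩
  · exact lt_irrefl r hlt
  · omega

theorem stmt7 [Fintype V] [DecidableEq V] (G : SimpleGraph V) [DecidableRel G.Adj]
    (P : Finset (Finset V)) (r s t : ℕ)
    (h : IsMaxRST G P r s t)
    (A B X : Finset V) (w w' : V)
    (hA : A ∈ P) (hAw : A = {w}) (hB : B ∈ P) (hBw : B = {w'}) (hAB : A ≠ B)
    (hX : X ∈ P) (hX3 : X.card = 3) :
    2 ≤ eB G {w, w'} X ∧
      (eB G {w, w'} X = 2 → eB G {w} X = 1 ∧ eB G {w'} X = 1) := by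
  have hww' : w ≠ w' := by rintro rfl; exact hAB (hAw.trans hBw.symm)
  have hsum : eB G {w, w'} X = eB G {w} X + eB G {w'} X := eB_pair G w w' hww' X
  -- key : one of the two singletons with no neighbour in X yields a contradiction
  have key : ∀ (A' B' : Finset V) (u u' : V), A' ∈ P → A' = {u} → B' ∈ P → B' = {u'} →
      A' ≠ B' → eB G {u} X = 0 → eB G {u'} X ≤ 2 → False := by
    intro A' B' u u' hA' hA'u hB' hB'u hAB' h0 h2
    rw [eB_singleton, card_eq_zero, filter_eq_empty_iff] at h0
    have hne : X.filter (fun y => ¬ G.Adj u' y) ≠ ∅ := by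
      intro he
      have : X.filter (fun y => G.Adj u' y) = X := by
        ext y
        simp only [mem_filter, and_iff_left_iff_imp]
        intro hy
        by_contra hc
        exact (eq_empty_iff_forall_notMem.1 he y) (mem_filter.2 ⟨hy, hc⟩)
      rw [eB_singleton, this, hX3] at h2
      omega
    obtain ⟨x, hxmem⟩ := nonempty_iff_ne_empty.2 hne
    obtain ⟨hxX, hxadj⟩ := mem_filter.1 hxmem
    exact swap_contra G P r s t h A' B' X u u' x hA' hA'u hB' hB'u hAB' hX hX3 h0 hxX hxadj
  have hb3 : eB G {w'} X ≤ 3 := by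
    rw [eB_singleton]
    exact hX3 ▸ card_le_card (filter_subset _ _)
  have ha3 : eB G {w} X ≤ 3 := by
    rw [eB_singleton]
    exact hX3 ▸ card_le_card (filter_subset _ _)
  have k1 : eB G {w} X = 0 → eB G {w'} X ≤ 2 → False :=
    fun h0 h2 => key A B w w' hA hAw hB hBw hAB h0 h2
  have k2 : eB G {w'} X = 0 → eB G {w} X ≤ 2 → False :=
    fun h0 h2 => key B A w' w hB hBw hA hAw (Ne.symm hAB) h0 h2
  constructor
  · by_contra hc
    push_neg at hc
    rw [hsum] at hc
    rcases Nat.eq_zero_or_pos (eB G {w} X) with h0 | hp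
    · exact k1 h0 (by omega)
    · exact k2 (by omega) (by omega)
  · intro h2
    rw [hsum] at h2
    rcases Nat.eq_zero_or_pos (eB G {w} X) with h0 | hp
    · exact absurd (k1 h0 (by omega)) not_false
    rcases Nat.eq_zero_or_pos (eB G {w'} X) with h0 | hp'
    · exact absurd (k2 h0 (by omega)) not_false
    omega
end

section
/- In a maximal [r,s,t]-coloring of a graph G, for any two distinct size-2 color classes U_j and U_{j'}, the induced subgraph G[U_j ∪ U_{j'}] contains a perfect matching (a 2-matching). -/
open Finset

variable {V : Type*}

lemma uniq_class [Fintype V] [DecidableEq V] {P : Finset (Finset V)}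
    (huniq : ∀ v : V, ∃! A, A ∈ P ∧ v ∈ A) {v : V} {A B : Finset V}
    (hA : A ∈ P) (hvA : v ∈ A) (hB : B ∈ P) (hvB : v ∈ B) : A = B := by
  obtain ⟨C, _, hC⟩ := huniq v
  rw [hC A ⟨hA, hvA⟩, hC B ⟨hB, hvB⟩]

lemma key [Fintype V] [DecidableEq V] (G : SimpleGraph V)
    (P : Finset (Finset V)) (r s t : ℕ)
    (h : IsMaxRST G P r s t)
    (U U' : Finset V) (hU : U ∈ P) (hU2 : U.card = 2)
    (hU' : U' ∈ P) (hU'2 : U'.card = 2) (hne : U ≠ U')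
    (x : V) (hx : x ∈ U) (hiso : ∀ w ∈ U', ¬ G.Adj x w) : False := by
  classical
  obtain ⟨⟨huniq, hind, hr, hs, ht, hsz⟩, hmax⟩ := h
  have hcard1 : (U.erase x).card = 1 := by
    rw [Finset.card_erase_of_mem hx, hU2]
  obtain ⟨y, hyU⟩ := Finset.card_eq_one.mp hcard1
  have hyE : y ∈ U.erase x := hyU ▸ Finset.mem_singleton_self y
  have hyx : y ≠ x := (Finset.mem_erase.mp hyE).1
  have hyUmem : y ∈ U := (Finset.mem_erase.mp hyE).2
  have hUxy : U = insert x {y} := by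
    rw [← hyU, Finset.insert_erase hx]
  have hxU' : x ∉ U' := fun hx' => hne (uniq_class huniq hU hx hU' hx')
  have hyU' : y ∉ U' := fun hy' => hne (uniq_class huniq hU hyUmem hU' hy')
  set N : Finset V := insert x U' with hN
  set S : Finset V := ({y} : Finset V) with hS
  set Q : Finset (Finset V) := (P.erase U).erase U' with hQ
  set P' : Finset (Finset V) := insert N (insert S Q) with hP'
  have hNcard : N.card = 3 := by
    rw [hN, Finset.card_insert_of_notMem hxU', hU'2]
  have hScard : S.card = 1 := Finset.card_singleton y
  have hxN : x ∈ N := Finset.mem_insert_self x U'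
  have hNP : N ∉ P := fun hNP => by
    have := uniq_class huniq hNP hxN hU hx
    rw [← this, hNcard] at hU2; omega
  have hSP : S ∉ P := fun hSP => by
    have := uniq_class huniq hSP (Finset.mem_singleton_self y) hU hyUmem
    rw [← this, hScard] at hU2; omega
  have hyN : y ∉ N := by
    rw [hN]; simp [hyx, hyU']
  have hNS : N ≠ S := fun e => by rw [e, hScard] at hNcard; omega
  -- membership characterization
  have hmemP' : ∀ A : Finset V, A ∈ P' ↔ A = N ∨ A = S ∨ (A ∈ P ∧ A ≠ U ∧ A ≠ U') := by
    intro A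
    rw [hP']
    simp only [Finset.mem_insert, hQ, Finset.mem_erase]
    tauto
  -- partition property
  have hpart : ∀ v : V, ∃! A, A ∈ P' ∧ v ∈ A := by
    intro v
    by_cases hvx : v = x
    · subst hvx
      refine ⟨N, ⟨(hmemP' N).mpr (Or.inl rfl), hxN⟩, ?_⟩
      rintro B ⟨hB, hvB⟩
      rcases (hmemP' B).mp hB with h1 | h1 | ⟨h1, h2, h3⟩
      · exact h1
      · rw [h1, hS] at hvB; simp at hvB; exact absurd hvB.symm hyx
      · exact absurd (uniq_class huniq h1 hvB hU hx) h2
    · by_cases hvU' : v ∈ U'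
      · refine ⟨N, ⟨(hmemP' N).mpr (Or.inl rfl), Finset.mem_insert_of_mem hvU'⟩, ?_⟩
        rintro B ⟨hB, hvB⟩
        rcases (hmemP' B).mp hB with h1 | h1 | ⟨h1, h2, h3⟩
        · exact h1
        · rw [h1, hS] at hvB; simp at hvB; subst hvB; exact absurd hvU' hyU'
        · exact absurd (uniq_class huniq h1 hvB hU' hvU') h3
      · by_cases hvy : v = y
        · subst hvy
          refine ⟨S, ⟨(hmemP' S).mpr (Or.inr (Or.inl rfl)), by rw [hS]; exact Finset.mem_singleton_self _⟩, ?_⟩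
          rintro B ⟨hB, hvB⟩
          rcases (hmemP' B).mp hB with h1 | h1 | ⟨h1, h2, h3⟩
          · rw [h1] at hvB; exact absurd hvB hyN
          · exact h1
          · exact absurd (uniq_class huniq h1 hvB hU hyUmem) h2
        · have hvU : v ∉ U := by rw [hUxy, hS]; simp [hvx, hvy]
          obtain ⟨A, ⟨hAP, hvA⟩, hAuniq⟩ := huniq v
          have hAne : A ≠ U := fun e => hvU (e ▸ hvA)
          have hAne' : A ≠ U' := fun e => hvU' (e ▸ hvA)
          refine ⟨A, ⟨(hmemP' A).mpr (Or.inr (Or.inr ⟨hAP, hAne, hAne'⟩)), hvA⟩, ?_⟩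
          rintro B ⟨hB, hvB⟩
          rcases (hmemP' B).mp hB with h1 | h1 | ⟨h1, h2, h3⟩
          · rw [h1] at hvB
            rcases Finset.mem_insert.mp hvB with e | e
            · exact absurd e hvx
            · exact absurd e hvU'
          · rw [h1, hS] at hvB; exact absurd (Finset.mem_singleton.mp hvB) hvy
          · exact hAuniq B ⟨h1, hvB⟩
  -- independence
  have hind' : ∀ A ∈ P', ∀ u ∈ A, ∀ w ∈ A, ¬ G.Adj u w := by
    intro A hA u hu w hw
    rcases (hmemP' A).mp hA with h1 | h1 | ⟨h1, _, _⟩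
    · subst h1
      rcases Finset.mem_insert.mp hu with e | e <;> rcases Finset.mem_insert.mp hw with f | f
      · subst e; subst f; exact G.irrefl
      · subst e; exact hiso w f
      · subst f; exact fun hadj => hiso u e hadj.symm
      · exact hind U' hU' u e w f
    · subst h1
      rw [hS, Finset.mem_singleton] at hu hw
      subst hu; subst hw; exact G.irrefl
    · exact hind A h1 u hu w hw
  -- sizes
  have hsz' : ∀ A ∈ P', A.card = 1 ∨ A.card = 2 ∨ A.card = 3 := by
    intro A hA
    rcases (hmemP' A).mp hA with h1 | h1 | ⟨h1, _, _⟩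
    · rw [h1, hNcard]; tauto
    · rw [h1, hScard]; tauto
    · exact hsz A h1
  have hRST : IsRST G P' ((P'.filter (fun A => A.card = 3)).card)
      ((P'.filter (fun A => A.card = 2)).card)
      ((P'.filter (fun A => A.card = 1)).card) :=
    ⟨hpart, hind', rfl, rfl, rfl, hsz'⟩
  have hr'eq : (P'.filter (fun A => A.card = 3)).card = r + 1 := by
    have hU3 : ¬ (U.card = 3) := by omega
    have hU'3 : ¬ (U'.card = 3) := by omega
    have e1 : U' ∉ (Finset.filter (fun A => A.card = 3) P).erase U :=
      fun hh => hU'3 (Finset.mem_filter.mp (Finset.mem_of_mem_erase hh)).2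
    have e2 : U ∉ Finset.filter (fun A => A.card = 3) P :=
      fun hh => hU3 (Finset.mem_filter.mp hh).2
    have e3 : N ∉ Finset.filter (fun A => A.card = 3) P :=
      fun hh => hNP (Finset.mem_filter.mp hh).1
    rw [hP', Finset.filter_insert, if_pos hNcard, Finset.filter_insert,
      if_neg (by rw [hScard]; omega), hQ, Finset.filter_erase, Finset.filter_erase,
      Finset.erase_eq_of_notMem e1, Finset.erase_eq_of_notMem e2,
      Finset.card_insert_of_notMem e3, hr]
  rcases hmax P' _ _ _ hRST with h1 | ⟨h1, _⟩ <;> omega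

theorem stmt9 [Fintype V] [DecidableEq V] (G : SimpleGraph V)
    (P : Finset (Finset V)) (r s t : ℕ)
    (h : IsMaxRST G P r s t)
    (U U' : Finset V)
    (hU : U ∈ P) (hU2 : U.card = 2) (hU' : U' ∈ P) (hU'2 : U'.card = 2)
    (hne : U ≠ U') :
    ∃ a b c d : V, a ∈ U ∧ c ∈ U ∧ b ∈ U' ∧ d ∈ U' ∧ a ≠ c ∧ b ≠ d ∧
      G.Adj a b ∧ G.Adj c d := by
  classical
  obtain ⟨a, c, hac, hUeq⟩ := Finset.card_eq_two.mp hU2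
  obtain ⟨b, d, hbd, hU'eq⟩ := Finset.card_eq_two.mp hU'2
  have haU : a ∈ U := by rw [hUeq]; simp
  have hcU : c ∈ U := by rw [hUeq]; simp
  have hbU' : b ∈ U' := by rw [hU'eq]; simp
  have hdU' : d ∈ U' := by rw [hU'eq]; simp
  by_cases h1 : G.Adj a b ∧ G.Adj c d
  · exact ⟨a, b, c, d, haU, hcU, hbU', hdU', hac, hbd, h1.1, h1.2⟩
  by_cases h2 : G.Adj a d ∧ G.Adj c b
  · exact ⟨a, d, c, b, haU, hcU, hdU', hbU', hac, hbd.symm, h2.1, h2.2⟩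
  exfalso
  have hcases : (¬G.Adj a b ∧ ¬G.Adj a d) ∨ (¬G.Adj c b ∧ ¬G.Adj c d) ∨
      (¬G.Adj a b ∧ ¬G.Adj c b) ∨ (¬G.Adj a d ∧ ¬G.Adj c d) := by tauto
  have hiso : ∀ (x : V) (h1 : ¬G.Adj x b) (h2 : ¬G.Adj x d), ∀ w ∈ U', ¬ G.Adj x w := by
    intro x hb hd w hw
    rw [hU'eq] at hw
    rcases Finset.mem_insert.mp hw with e | e
    · exact e ▸ hb
    · exact (Finset.mem_singleton.mp e) ▸ hd
  have hiso' : ∀ (x : V) (h1 : ¬G.Adj a x) (h2 : ¬G.Adj c x), ∀ w ∈ U, ¬ G.Adj x w := by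
    intro x ha hc w hw
    rw [hUeq] at hw
    rcases Finset.mem_insert.mp hw with e | e
    · exact e ▸ fun hadj => ha hadj.symm
    · exact (Finset.mem_singleton.mp e) ▸ fun hadj => hc hadj.symm
  rcases hcases with ⟨p, q⟩ | ⟨p, q⟩ | ⟨p, q⟩ | ⟨p, q⟩
  · exact key G P r s t h U U' hU hU2 hU' hU'2 hne a haU (hiso a p q)
  · exact key G P r s t h U U' hU hU2 hU' hU'2 hne c hcU (hiso c p q)
  · exact key G P r s t h U' U hU' hU'2 hU hU2 hne.symm b hbU' (hiso' b p q)
  · exact key G P r s t h U' U hU' hU'2 hU hU2 hne.symm d hdU' (hiso' d p q)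
end

section
/- In a maximal [r,s,t]-coloring of a graph G with size-2 classes U_1,…,U_s, if for every pair of distinct indices j, j' there are exactly 2 edges between U_j and U_{j'}, then the subgraph induced by the union of all U_j is isomorphic to the disjoint union of two complete graphs K_s. -/
open Finset

variable {V : Type*}

/-! Maximality forbids an independent triple of vertices lying in classes of size at most 2:
it could be made a new class of size 3, the other vertices of the classes it meets becoming
singletons. Hence every vertex of a 2-class has a neighbour in every other 2-class, so the two
edges between two 2-classes form a perfect matching. Moreover two neighbours `u ∈ B`, `w ∈ C` of
a vertex `x ∈ A` (three distinct 2-classes) are adjacent, since otherwise `x` and the partners of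
`u` and `w` would be an independent triple. So "equal or adjacent" is an equivalence relation on
the union of the 2-classes, each vertex is related to one of the two vertices of a fixed 2-class,
and each 2-class meets each of the two resulting cliques exactly once. -/

open Function

lemma Finset.exists_eq_pair_of_mem [DecidableEq V] {U : Finset V} (hU : U.card = 2) {v : V}
    (hv : v ∈ U) : ∃ u, u ≠ v ∧ U = {v, u} := by
  obtain ⟨a, b, hab, rfl⟩ := card_eq_two.mp hU
  rcases mem_insert.mp hv with rfl | hv
  · exact ⟨b, hab.symm, rfl⟩
  · rw [mem_singleton.mp hv]
    exact ⟨a, hab, pair_comm a b⟩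

section TwoCliques

variable [DecidableEq V] {G : SimpleGraph V}

lemma eq_or_adj_iff_of_mem_biUnion {Q : Finset (Finset V)} {a₀ a₁ : V} (ha : {a₀, a₁} ∈ Q)
    (hnbr : ∀ U ∈ Q, ∀ U' ∈ Q, U ≠ U' → ∀ x ∈ U, ∃ y ∈ U', G.Adj x y)
    (htrans : ∀ x ∈ Q.biUnion id, ∀ y ∈ Q.biUnion id, ∀ z ∈ Q.biUnion id,
      G.Adj x y → G.Adj y z → x ≠ z → G.Adj x z)
    {x y : V} (hx : x ∈ Q.biUnion id) (hy : y ∈ Q.biUnion id) :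
    (x = y ∨ G.Adj x y) ↔ ((a₀ = x ∨ G.Adj a₀ x) ↔ (a₀ = y ∨ G.Adj a₀ y)) := by
  set W := Q.biUnion id
  have ha₀ : a₀ ∈ W := mem_biUnion.mpr ⟨_, ha, by simp⟩
  have ha₁ : a₁ ∈ W := mem_biUnion.mpr ⟨_, ha, by simp⟩
  let R : V → V → Prop := fun x y => x = y ∨ G.Adj x y
  have hRsymm : ∀ {x y}, R x y → R y x := Or.imp Eq.symm SimpleGraph.Adj.symm
  have hRtrans : ∀ {x y z}, x ∈ W → y ∈ W → z ∈ W → R x y → R y z → R x z := by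
    rintro x y z hx hy hz (rfl | hxy) (rfl | hyz)
    · exact Or.inl rfl
    · exact Or.inr hyz
    · exact Or.inr hxy
    · by_cases hxz : x = z
      exacts [Or.inl hxz, Or.inr (htrans x hx y hy z hz hxy hyz hxz)]
  have hcover : ∀ y ∈ W, R a₀ y ∨ R a₁ y := by
    intro y hy
    obtain ⟨U, hU, hyU⟩ := mem_biUnion.mp hy
    by_cases hUa : U = {a₀, a₁}
    · simp only [hUa, id, mem_insert, mem_singleton] at hyU
      rcases hyU with rfl | rfl
      exacts [Or.inl (Or.inl rfl), Or.inr (Or.inl rfl)]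
    · obtain ⟨z, hz, hyz⟩ := hnbr U hU _ ha hUa y hyU
      simp only [mem_insert, mem_singleton] at hz
      rcases hz with rfl | rfl
      exacts [Or.inl (Or.inr hyz.symm), Or.inr (Or.inr hyz.symm)]
  refine ⟨fun hxy => ⟨fun h => hRtrans ha₀ hx hy h hxy,
    fun h => hRtrans ha₀ hy hx h (hRsymm hxy)⟩, fun hxy => ?_⟩
  by_cases h₀ : R a₀ x
  · exact hRtrans hx ha₀ hy (hRsymm h₀) (hxy.mp h₀)
  · have h₁x := (hcover x hx).resolve_left h₀
    have h₁y := (hcover y hy).resolve_left (mt hxy.mpr h₀)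
    exact hRtrans hx ha₁ hy (hRsymm h₁x) h₁y

theorem nonempty_induce_biUnion_iso_two_cliques (Q : Finset (Finset V))
    (hdisj : (Q : Set (Finset V)).PairwiseDisjoint id) (hcard : ∀ U ∈ Q, U.card = 2)
    (hind : ∀ U ∈ Q, ∀ x ∈ U, ∀ y ∈ U, ¬ G.Adj x y)
    (hnbr : ∀ U ∈ Q, ∀ U' ∈ Q, U ≠ U' → ∀ x ∈ U, ∃ y ∈ U', G.Adj x y)
    (htrans : ∀ x ∈ Q.biUnion id, ∀ y ∈ Q.biUnion id, ∀ z ∈ Q.biUnion id,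
      G.Adj x y → G.Adj y z → x ≠ z → G.Adj x z) :
    Nonempty (G.induce (Q.biUnion id : Set V) ≃g
      SimpleGraph.fromRel fun p q : Fin 2 × Fin Q.card => p.1 = q.1) := by
  classical
  rcases Q.eq_empty_or_nonempty with rfl | ⟨U₀, hU₀⟩
  · rw [biUnion_empty, coe_empty, card_empty]
    exact ⟨⟨Equiv.equivOfIsEmpty _ _, fun {a} => isEmptyElim a⟩⟩
  obtain ⟨a₀, a₁, -, rfl⟩ := card_eq_two.mp (hcard U₀ hU₀)
  set W := Q.biUnion id
  choose cls hcls using fun x : W => mem_biUnion.mp x.2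
  let f : W → Fin 2 × Fin Q.card := fun x =>
    (if a₀ = x ∨ G.Adj a₀ x then 0 else 1, Q.equivFin ⟨cls x, (hcls x).1⟩)
  have hf₁ : ∀ x y, (f x).1 = (f y).1 ↔ (x.1 = y.1 ∨ G.Adj x y) := fun x y => by
    rw [eq_or_adj_iff_of_mem_biUnion hU₀ hnbr htrans x.2 y.2]
    by_cases hx : a₀ = x ∨ G.Adj a₀ x <;> by_cases hy : a₀ = y ∨ G.Adj a₀ y <;> simp [f, hx, hy]
  have hinj : Injective f := by
    intro x y hxy
    have hcls_eq : cls x = cls y := by simpa [f] using congrArg Prod.snd hxy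
    rcases (hf₁ x y).mp (congrArg Prod.fst hxy) with h | h
    · exact Subtype.ext h
    · exact absurd h (hind _ (hcls y).1 x (hcls_eq ▸ (hcls x).2) y (hcls y).2)
  have hbij : Bijective f := (Fintype.bijective_iff_injective_and_card f).mpr
    ⟨hinj, by simp [W, card_biUnion hdisj, sum_const_nat hcard, mul_comm]⟩
  refine ⟨⟨Equiv.ofBijective f hbij, fun {x y} => ?_⟩⟩
  rw [Equiv.ofBijective_apply, Equiv.ofBijective_apply, SimpleGraph.fromRel_adj, hinj.ne_iff,
    hf₁, hf₁]
  show _ ↔ G.Adj x y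
  constructor
  · rintro ⟨hne, (h | h) | (h | h)⟩
    exacts [absurd (Subtype.ext h) hne, h, absurd (Subtype.ext h.symm) hne, h.symm]
  · exact fun hadj => ⟨fun h => G.irrefl (h ▸ hadj), Or.inl (Or.inr hadj)⟩

end TwoCliques

section Coloring

variable [Fintype V] [DecidableEq V] {G : SimpleGraph V} {P : Finset (Finset V)} {r s t : ℕ}

lemma IsRST.eq_of_mem_s10 (hP : IsRST G P r s t) {A B : Finset V} {v : V} (hA : A ∈ P) (hB : B ∈ P)
    (hvA : v ∈ A) (hvB : v ∈ B) : A = B :=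
  (hP.1 v).unique ⟨hA, hvA⟩ ⟨hB, hvB⟩

lemma IsRST.pairwiseDisjoint (hP : IsRST G P r s t) : (P : Set (Finset V)).PairwiseDisjoint id :=
  fun _ hA _ hB hAB => Finset.disjoint_left.mpr fun _ hvA hvB => hAB (hP.eq_of_mem_s10 hA hB hvA hvB)

lemma exists_isRST_image (c : V → Finset V) (hmem : ∀ v, v ∈ c v)
    (hc : ∀ v w, v ∈ c w → c v = c w) (hind : ∀ v, ∀ x ∈ c v, ∀ y ∈ c v, ¬ G.Adj x y)
    (hcard : ∀ v, (c v).card ≤ 3) : ∃ r s t, IsRST G (univ.image c) r s t := by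
  refine ⟨_, _, _, fun v => ⟨c v, ⟨mem_image_of_mem c (mem_univ v), hmem v⟩, ?_⟩, ?_,
    rfl, rfl, rfl, ?_⟩
  · rintro A ⟨hA, hvA⟩
    obtain ⟨w, -, rfl⟩ := mem_image.mp hA
    exact (hc v w hvA).symm
  · rintro A hA
    obtain ⟨w, -, rfl⟩ := mem_image.mp hA
    exact hind w
  · rintro A hA
    obtain ⟨w, -, rfl⟩ := mem_image.mp hA
    have := card_pos.mpr ⟨w, hmem w⟩
    have := hcard w
    omega

lemma IsRST.ne_of_mem_of_ne (hP : IsRST G P r s t) {A B : Finset V} {v w : V} (hA : A ∈ P)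
    (hB : B ∈ P) (hAB : A ≠ B) (hv : v ∈ A) (hw : w ∈ B) : v ≠ w :=
  fun hvw => hAB (hP.eq_of_mem_s10 hA hB hv (hvw ▸ hw))

/-- `X` becomes a class; the other classes meeting `X` are split into singletons. -/
lemma IsRST.exists_isRST_of_indep (hP : IsRST G P r s t) {X : Finset V} (hX : X.Nonempty)
    (hX3 : X.card ≤ 3) (hXind : ∀ u ∈ X, ∀ w ∈ X, ¬ G.Adj u w) :
    ∃ P' r' s' t', IsRST G P' r' s' t' ∧ X ∈ P' ∧ ∀ A ∈ P, Disjoint A X → A ∈ P' := by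
  choose c hcP hmem using fun v => (hP.1 v).exists
  let c' : V → Finset V := fun v => if v ∈ X then X else if Disjoint (c v) X then c v else {v}
  have hc' : ∀ v w, v ∈ c' w → c' v = c' w := by
    intro v w hv
    by_cases hwX : w ∈ X
    · simp_all [c']
    by_cases hw : Disjoint (c w) X
    · simp only [c', hwX, hw, if_false, if_true] at hv ⊢
      have hcv : c v = c w := hP.eq_of_mem_s10 (hcP v) (hcP w) (hmem v) hv
      simp [disjoint_left.mp hw hv, hcv, hw]
    · simp only [c', hwX, hw, if_false, mem_singleton] at hv ⊢
      simp [hv, hwX, hw]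
  obtain ⟨r', s', t', hP'⟩ := exists_isRST_image (G := G) c'
    (fun v => by by_cases hv : v ∈ X <;> by_cases hd : Disjoint (c v) X <;> simp [c', *])
    hc'
    (fun v => by
      by_cases hv : v ∈ X
      · simpa [c', hv] using hXind
      by_cases hd : Disjoint (c v) X
      · simpa [c', hv, hd] using hP.2.1 _ (hcP v)
      · simp [c', hv, hd])
    (fun v => by
      by_cases hv : v ∈ X
      · simpa [c', hv] using hX3
      by_cases hd : Disjoint (c v) X
      · have := hP.2.2.2.2.2 _ (hcP v)
        simp only [c', hv, hd, if_false, if_true]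
        omega
      · simp [c', hv, hd])
  obtain ⟨x, hx⟩ := hX
  refine ⟨_, r', s', t', hP', mem_image.mpr ⟨x, mem_univ x, by simp [c', hx]⟩, fun A hA hd => ?_⟩
  obtain ⟨a, ha⟩ := card_pos.mp (by have := hP.2.2.2.2.2 A hA; omega : 0 < A.card)
  have hca : c a = A := hP.eq_of_mem_s10 (hcP a) hA (hmem a) ha
  exact mem_image.mpr ⟨a, mem_univ a, by simp [c', disjoint_left.mp hd ha, hca, hd]⟩

lemma IsMaxRST.exists_adj_of_card_eq_three (h : IsMaxRST G P r s t) {X : Finset V}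
    (hX : X.card = 3) (hsmall : ∀ x ∈ X, ∃ A ∈ P, x ∈ A ∧ A.card ≤ 2) :
    ∃ u ∈ X, ∃ w ∈ X, G.Adj u w := by
  by_contra! hXind
  have hdisj : ∀ A ∈ P, A.card = 3 → Disjoint A X := by
    refine fun A hA hA3 => disjoint_right.mpr fun x hx hxA => ?_
    obtain ⟨B, hB, hxB, hB2⟩ := hsmall x hx
    rw [h.1.eq_of_mem_s10 hA hB hxA hxB] at hA3
    omega
  obtain ⟨P', r', s', t', hP', hXP', hPP'⟩ :=
    h.1.exists_isRST_of_indep (card_pos.mp (by omega)) hX.le hXind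
  have hXnew : X ∉ P.filter (·.card = 3) := fun hXP => by
    obtain ⟨x, hx⟩ := card_pos.mp (by omega : 0 < X.card)
    exact disjoint_left.mp (hdisj X (mem_filter.mp hXP).1 hX) hx hx
  have hsub : insert X (P.filter (·.card = 3)) ⊆ P'.filter (·.card = 3) := by
    refine insert_subset (mem_filter.mpr ⟨hXP', hX⟩) fun A hA => ?_
    obtain ⟨hAP, hA3⟩ := mem_filter.mp hA
    exact mem_filter.mpr ⟨hPP' A hAP (hdisj A hAP hA3), hA3⟩
  have hcount := card_le_card hsub
  rw [card_insert_of_notMem hXnew, h.1.2.2.1, hP'.2.2.1] at hcount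
  rcases h.2 P' r' s' t' hP' with hlt | ⟨heq, -⟩ <;> omega

lemma IsMaxRST.exists_adj_mem_of_card_eq_two (h : IsMaxRST G P r s t) {U U' : Finset V}
    (hU : U ∈ P) (hU2 : U.card = 2) (hU' : U' ∈ P) (hU'2 : U'.card = 2) (hne : U ≠ U')
    {v : V} (hv : v ∈ U) : ∃ w ∈ U', G.Adj v w := by
  by_contra! hno
  have hvU' : v ∉ U' := fun hvU' => h.1.ne_of_mem_of_ne hU hU' hne hv hvU' rfl
  obtain ⟨x, hx, y, hy, hxy⟩ := h.exists_adj_of_card_eq_three (X := insert v U')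
    (by rw [card_insert_of_notMem hvU', hU'2])
    (by simpa using ⟨⟨U, hU, hv, hU2.le⟩, fun x hx => ⟨U', hU', hx, hU'2.le⟩⟩)
  rw [mem_insert] at hx hy
  rcases hx with rfl | hx <;> rcases hy with rfl | hy
  · exact G.irrefl hxy
  · exact hno y hy hxy
  · exact hno x hx hxy.symm
  · exact h.1.2.1 U' hU' x hx y hy hxy

lemma eB_eq_sum_card_filter_adj [DecidableRel G.Adj] (X Y : Finset V) :
    eB G X Y = ∑ v ∈ X, (Y.filter (G.Adj v)).card := by
  simp only [eB, card_filter, sum_product]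

lemma IsMaxRST.card_filter_adj_eq_one [DecidableRel G.Adj] (h : IsMaxRST G P r s t)
    {U U' : Finset V} (hU : U ∈ P) (hU2 : U.card = 2) (hU' : U' ∈ P) (hU'2 : U'.card = 2)
    (hne : U ≠ U') (heB : eB G U U' = 2) {v : V} (hv : v ∈ U) :
    (U'.filter (G.Adj v)).card = 1 := by
  have hpos : ∀ x ∈ U, 0 < (U'.filter (G.Adj x)).card := fun x hx =>
    let ⟨w, hw, hxw⟩ := h.exists_adj_mem_of_card_eq_two hU hU2 hU' hU'2 hne hx
    card_pos.mpr ⟨w, mem_filter.mpr ⟨hw, hxw⟩⟩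
  obtain ⟨a, b, hab, rfl⟩ := card_eq_two.mp hU2
  rw [eB_eq_sum_card_filter_adj, sum_pair hab] at heB
  have ha := hpos a (by simp)
  have hb := hpos b (by simp)
  rcases mem_insert.mp hv with rfl | hv
  · omega
  · rw [mem_singleton.mp hv]
    omega

lemma IsMaxRST.eq_of_adj_of_adj [DecidableRel G.Adj] (h : IsMaxRST G P r s t)
    {U U' : Finset V} (hU : U ∈ P) (hU2 : U.card = 2) (hU' : U' ∈ P) (hU'2 : U'.card = 2)
    (hne : U ≠ U') (heB : eB G U U' = 2) {v w w' : V} (hv : v ∈ U) (hw : w ∈ U')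
    (hw' : w' ∈ U') (hvw : G.Adj v w) (hvw' : G.Adj v w') : w = w' :=
  card_le_one.mp (h.card_filter_adj_eq_one hU hU2 hU' hU'2 hne heB hv).le w
    (mem_filter.mpr ⟨hw, hvw⟩) w' (mem_filter.mpr ⟨hw', hvw'⟩)

lemma IsMaxRST.adj_of_adj_of_adj [DecidableRel G.Adj] (h : IsMaxRST G P r s t)
    (hpair : ∀ U ∈ P, U.card = 2 → ∀ U' ∈ P, U'.card = 2 → U ≠ U' → eB G U U' = 2)
    {A B C : Finset V} (hA : A ∈ P) (hA2 : A.card = 2) (hB : B ∈ P) (hB2 : B.card = 2)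
    (hC : C ∈ P) (hC2 : C.card = 2) (hAB : A ≠ B) (hAC : A ≠ C) (hBC : B ≠ C)
    {x u w : V} (hx : x ∈ A) (hu : u ∈ B) (hw : w ∈ C) (hux : G.Adj u x) (hwx : G.Adj w x) :
    G.Adj u w := by
  by_contra huw
  obtain ⟨b₁, hb₁u, rfl⟩ := exists_eq_pair_of_mem hB2 hu
  obtain ⟨b₃, hb₃w, rfl⟩ := exists_eq_pair_of_mem hC2 hw
  have hxb₁ : ¬ G.Adj x b₁ := fun hxb₁ => hb₁u <|
    h.eq_of_adj_of_adj hA hA2 hB hB2 hAB (hpair A hA hA2 _ hB hB2 hAB) hx (by simp) hu hxb₁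
      hux.symm
  have hxb₃ : ¬ G.Adj x b₃ := fun hxb₃ => hb₃w <|
    h.eq_of_adj_of_adj hA hA2 hC hC2 hAC (hpair A hA hA2 _ hC hC2 hAC) hx (by simp) hw hxb₃
      hwx.symm
  have hwb₁ : G.Adj w b₁ := by
    obtain ⟨y, hy, hwy⟩ := h.exists_adj_mem_of_card_eq_two hC hC2 hB hB2 hBC.symm hw
    rcases mem_insert.mp hy with rfl | hy
    · exact absurd hwy.symm huw
    · rwa [mem_singleton.mp hy] at hwy
  have hb₁b₃ : ¬ G.Adj b₁ b₃ := fun hb₁b₃ => hb₃w <|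
    h.eq_of_adj_of_adj hB hB2 hC hC2 hBC (hpair _ hB hB2 _ hC hC2 hBC) (by simp) (by simp) hw
      hb₁b₃ hwb₁.symm
  obtain ⟨y, hy, z, hz, hyz⟩ := h.exists_adj_of_card_eq_three (X := {x, b₁, b₃})
    (card_eq_three.mpr ⟨x, b₁, b₃, h.1.ne_of_mem_of_ne hA hB hAB hx (by simp),
      h.1.ne_of_mem_of_ne hA hC hAC hx (by simp), h.1.ne_of_mem_of_ne hB hC hBC (by simp) (by simp),
      rfl⟩)
    (by simpa using ⟨⟨A, hA, hx, hA2.le⟩, ⟨_, hB, by simp, hB2.le⟩, ⟨_, hC, by simp, hC2.le⟩⟩)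
  simp only [mem_insert, mem_singleton] at hy hz
  rcases hy with rfl | rfl | rfl <;> rcases hz with rfl | rfl | rfl <;>
    simp_all [G.adj_comm]

lemma IsMaxRST.adj_trans [DecidableRel G.Adj] (h : IsMaxRST G P r s t)
    (hpair : ∀ U ∈ P, U.card = 2 → ∀ U' ∈ P, U'.card = 2 → U ≠ U' → eB G U U' = 2)
    {A B C : Finset V} (hA : A ∈ P) (hA2 : A.card = 2) (hB : B ∈ P) (hB2 : B.card = 2)
    (hC : C ∈ P) (hC2 : C.card = 2) {x y z : V} (hx : x ∈ A) (hy : y ∈ B) (hz : z ∈ C)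
    (hxy : G.Adj x y) (hyz : G.Adj y z) (hxz : x ≠ z) : G.Adj x z := by
  have hBA : B ≠ A := by
    rintro rfl
    exact h.1.2.1 B hB x hx y hy hxy
  have hBC : B ≠ C := by
    rintro rfl
    exact h.1.2.1 B hB y hy z hz hyz
  have hAC : A ≠ C := by
    rintro rfl
    exact hxz (h.eq_of_adj_of_adj hB hB2 hA hA2 hBA (hpair B hB hB2 A hA hA2 hBA) hy hx hz
      hxy.symm hyz)
  exact h.adj_of_adj_of_adj hpair hB hB2 hA hA2 hC hC2 hBA hBC hAC hy hx hz hxy hyz.symm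

end Coloring

theorem stmt10 [Fintype V] [DecidableEq V] (G : SimpleGraph V) [DecidableRel G.Adj]
    (P : Finset (Finset V)) (r s t : ℕ)
    (h : IsMaxRST G P r s t)
    (hpair : ∀ U ∈ P, U.card = 2 → ∀ U' ∈ P, U'.card = 2 → U ≠ U' →
      eB G U U' = 2) :
    Nonempty
      ((G.induce (↑((P.filter fun A => A.card = 2).biUnion id) : Set V)) ≃g
        (SimpleGraph.fromRel fun p q : Fin 2 × Fin s => p.1 = q.1)) := by
  obtain rfl : (P.filter fun A => A.card = 2).card = s := h.1.2.2.2.1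
  refine nonempty_induce_biUnion_iso_two_cliques _
    (h.1.pairwiseDisjoint.subset (coe_subset.mpr (filter_subset _ _)))
    (fun U hU => (mem_filter.mp hU).2) (fun U hU => h.1.2.1 U (mem_filter.mp hU).1) ?_ ?_
  · intro U hU U' hU' hne x hx
    rw [mem_filter] at hU hU'
    exact h.exists_adj_mem_of_card_eq_two hU.1 hU.2 hU'.1 hU'.2 hne hx
  · intro x hx y hy z hz
    simp only [mem_biUnion, mem_filter, id] at hx hy hz
    obtain ⟨A, ⟨hA, hA2⟩, hxA⟩ := hx
    obtain ⟨B, ⟨hB, hB2⟩, hyB⟩ := hy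
    obtain ⟨C, ⟨hC, hC2⟩, hzC⟩ := hz
    exact h.adj_trans hpair hA hA2 hB hB2 hC hC2 hxA hyB hzC
end

section
/- In a maximal [r,s,t]-coloring of a graph G, if a singleton-class vertex w_k has exactly one neighbor in each of two distinct size-2 classes U_j and U_{j'}, and there are exactly 2 edges between U_j and U_{j'}, then the induced subgraph G[{w_k} ∪ U_j ∪ U_{j'}] is isomorphic to the disjoint union of an edge and a triangle (K_2 ∪ K_3). -/
open Finset

variable {V : Type*}

lemma eB_sp [Fintype V] [DecidableEq V] (G : SimpleGraph V) [DecidableRel G.Adj]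
    (w a a' : V) (h : a ≠ a') :
    eB G {w} {a, a'} = (if G.Adj w a then 1 else 0) + (if G.Adj w a' then 1 else 0) := by
  unfold eB
  rw [Finset.card_filter, Finset.sum_product, Finset.sum_singleton, Finset.sum_pair h]

lemma eB_pp [Fintype V] [DecidableEq V] (G : SimpleGraph V) [DecidableRel G.Adj]
    (a a' b b' : V) (h1 : a ≠ a') (h2 : b ≠ b') :
    eB G {a, a'} {b, b'} = ((if G.Adj a b then 1 else 0) + (if G.Adj a b' then 1 else 0)) +
      ((if G.Adj a' b then 1 else 0) + (if G.Adj a' b' then 1 else 0)) := by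
  unfold eB
  rw [Finset.card_filter, Finset.sum_product, Finset.sum_pair h1, Finset.sum_pair h2,
    Finset.sum_pair h2]

set_option maxHeartbeats 1600000 in
lemma key_s15 [Fintype V] [DecidableEq V] (G : SimpleGraph V) [DecidableRel G.Adj]
    (w a a' b b' : V)
    (hwa0 : w ≠ a) (hwa'0 : w ≠ a') (hwb0 : w ≠ b) (hwb'0 : w ≠ b')
    (haa'0 : a ≠ a') (hbb'0 : b ≠ b')
    (hab0 : a ≠ b) (hab'0 : a ≠ b') (ha'b0 : a' ≠ b) (ha'b'0 : a' ≠ b')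
    (nt : ∀ x y z : V,
      (x = w ∨ x = a ∨ x = a' ∨ x = b ∨ x = b') →
      (y = w ∨ y = a ∨ y = a' ∨ y = b ∨ y = b') →
      (z = w ∨ z = a ∨ z = a' ∨ z = b ∨ z = b') →
      x ≠ y → x ≠ z → y ≠ z →
      ¬G.Adj x y → ¬G.Adj x z → ¬G.Adj y z → False)
    (hwa : G.Adj w a) (hwa' : ¬G.Adj w a') (hwb : G.Adj w b) (hwb' : ¬G.Adj w b')
    (haa' : ¬G.Adj a a') (hbb' : ¬G.Adj b b')
    (heB : eB G {a, a'} {b, b'} = 2) :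
    Nonempty
      ((G.induce (↑(insert w ({a, a'} ∪ {b, b'} : Finset V)) : Set V)) ≃g
        (SimpleGraph.fromRel fun p q : Fin 2 ⊕ Fin 3 => p.isLeft = q.isLeft)) := by
  rw [eB_pp G a a' b b' haa'0 hbb'0] at heB
  have ha'b' : G.Adj a' b' := by
    by_contra hc
    exact nt w a' b' (by tauto) (by tauto) (by tauto) hwa'0 hwb'0 ha'b'0 hwa' hwb' hc
  have hab : G.Adj a b := by
    by_contra hc
    have h1 : G.Adj a' b := by
      by_contra hc2
      exact nt a a' b (by tauto) (by tauto) (by tauto) haa'0 hab0 ha'b0 haa' hc hc2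
    have h2 : G.Adj a b' := by
      by_contra hc2
      exact nt a b b' (by tauto) (by tauto) (by tauto) hab0 hab'0 hbb'0 hc hc2 hbb'
    rw [if_neg hc, if_pos h1, if_pos h2, if_pos ha'b'] at heB
    omega
  rw [if_pos hab, if_pos ha'b'] at heB
  have hab' : ¬G.Adj a b' := by
    intro hc; rw [if_pos hc] at heB; split_ifs at heB <;> omega
  have ha'b : ¬G.Adj a' b := by
    intro hc; rw [if_pos hc] at heB; split_ifs at heB <;> omega
  -- symmetric versions
  have hwa'S : ¬G.Adj a' w := fun hh => hwa' hh.symm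
  have hwb'S : ¬G.Adj b' w := fun hh => hwb' hh.symm
  have haa'S : ¬G.Adj a' a := fun hh => haa' hh.symm
  have hbb'S : ¬G.Adj b' b := fun hh => hbb' hh.symm
  have hab'S : ¬G.Adj b' a := fun hh => hab' hh.symm
  have ha'bS : ¬G.Adj b a' := fun hh => ha'b hh.symm
  have hset : (↑(insert w ({a, a'} ∪ {b, b'} : Finset V)) : Set V) =
      (insert w ({a, a'} ∪ {b, b'}) : Set V) := by ext v; simp; tauto
  rw [hset]
  refine ⟨SimpleGraph.Iso.symm ⟨⟨Sum.elim ![⟨a', by simp⟩, ⟨b', by simp⟩]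
      ![⟨w, by simp⟩, ⟨a, by simp⟩, ⟨b, by simp⟩],
    fun v => if v.1 = a' then .inl 0 else if v.1 = b' then .inl 1 else
      if v.1 = w then .inr 0 else if v.1 = a then .inr 1 else .inr 2, ?_, ?_⟩, ?_⟩⟩
  · intro p
    rcases p with i | i <;> fin_cases i <;>
      simp [hwa0, hwa'0, hwb0, hwb'0, haa'0, hbb'0, hab0, hab'0, ha'b0, ha'b'0,
        Ne.symm haa'0, Ne.symm ha'b'0, Ne.symm hab'0, Ne.symm hwa'0, Ne.symm hwb'0,
        Ne.symm hwa0, Ne.symm hwb0, Ne.symm hab0, Ne.symm ha'b0, Ne.symm hbb'0]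
  · rintro ⟨v, hv⟩
    simp only [Set.mem_insert_iff, Set.mem_union, Set.mem_singleton_iff] at hv
    rcases hv with rfl | (rfl | rfl) | (rfl | rfl) <;>
      apply Subtype.ext <;>
      simp [hwa0, hwa'0, hwb0, hwb'0, haa'0, hbb'0, hab0, hab'0, ha'b0, ha'b'0,
        Ne.symm haa'0, Ne.symm ha'b'0, Ne.symm hab'0, Ne.symm hwa'0, Ne.symm hwb'0,
        Ne.symm hwa0, Ne.symm hwb0, Ne.symm hab0, Ne.symm ha'b0, Ne.symm hbb'0]
  · intro p q
    rcases p with i | i <;> rcases q with j | j <;> fin_cases i <;> fin_cases j <;>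
      simp [SimpleGraph.comap_adj, SimpleGraph.fromRel_adj, hwa, hwa', hwb, hwb',
        haa', hbb', hab, hab', ha'b, ha'b', hwa'S, hwb'S, haa'S, hbb'S, hab'S, ha'bS,
        hwa.symm, hwb.symm, hab.symm, ha'b'.symm,
        hwa0, hwa'0, hwb0, hwb'0, haa'0, hbb'0, hab0, hab'0, ha'b0, ha'b'0]

lemma noTriple [Fintype V] [DecidableEq V] (G : SimpleGraph V) [DecidableRel G.Adj]
    (P : Finset (Finset V)) (r s t : ℕ) (h : IsMaxRST G P r s t)
    (A U U' : Finset V) (w : V)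
    (hA : A ∈ P) (hAw : A = {w})
    (hU : U ∈ P) (hU2 : U.card = 2) (hU' : U' ∈ P) (hU'2 : U'.card = 2)
    (x y z : V) (hx : x ∈ insert w (U ∪ U')) (hy : y ∈ insert w (U ∪ U'))
    (hz : z ∈ insert w (U ∪ U'))
    (hxy : x ≠ y) (hxz : x ≠ z) (hyz : y ≠ z)
    (axy : ¬G.Adj x y) (axz : ¬G.Adj x z) (ayz : ¬G.Adj y z) : False := by
  obtain ⟨⟨huniq, hindep, hr, hs, ht, hcards⟩, hmax⟩ := h
  set W5 : Finset V := insert w (U ∪ U') with hW5def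
  have hW5 : ∀ v, v ∈ W5 ↔ v ∈ A ∨ v ∈ U ∨ v ∈ U' := by
    intro v; simp [hW5def, hAw]
  have hdisj : ∀ B ∈ P, ∀ C ∈ P, B ≠ C → ∀ v, v ∈ B → v ∈ C → False := by
    intro B hB C hC hBC v hvB hvC
    obtain ⟨D, _, hDuniq⟩ := huniq v
    exact hBC ((hDuniq B ⟨hB, hvB⟩).trans (hDuniq C ⟨hC, hvC⟩).symm)
  set S : Finset V := {x, y, z} with hSdef
  have hScard : S.card = 3 := by
    rw [hSdef, card_insert_of_notMem (by simp [hxy, hxz]),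
      card_insert_of_notMem (by simp [hyz]), card_singleton]
  have hSsub : S ⊆ W5 := by
    intro v hv
    rcases mem_insert.1 hv with rfl | hv
    · exact hx
    rcases mem_insert.1 hv with rfl | hv
    · exact hy
    · exact (mem_singleton.1 hv) ▸ hz
  set T : Finset V := W5 \ S with hTdef
  set Q : Finset (Finset V) := ((P.erase A).erase U).erase U' with hQdef
  set P' : Finset (Finset V) := insert S ((T.image fun v => ({v} : Finset V)) ∪ Q)
    with hP'def
  have hQP : Q ⊆ P := (erase_subset _ _).trans ((erase_subset _ _).trans (erase_subset _ _))
  have hQW5 : ∀ B ∈ Q, ∀ v ∈ B, v ∉ W5 := by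
    intro B hB v hvB hvW
    have hBU' : B ≠ U' := (mem_erase.1 hB).1
    have hBU : B ≠ U := (mem_erase.1 (mem_erase.1 hB).2).1
    have hBA : B ≠ A := (mem_erase.1 (mem_erase.1 (mem_erase.1 hB).2).2).1
    rcases (hW5 v).1 hvW with h1 | h1 | h1
    · exact hdisj B (hQP hB) A hA hBA v hvB h1
    · exact hdisj B (hQP hB) U hU hBU v hvB h1
    · exact hdisj B (hQP hB) U' hU' hBU' v hvB h1
  have hmemP' : ∀ B, B ∈ P' ↔ B = S ∨ (∃ u ∈ T, ({u} : Finset V) = B) ∨ B ∈ Q := by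
    intro B; simp [hP'def]
  -- existence and uniqueness of classes in P'
  have huniq' : ∀ v : V, ∃! B, B ∈ P' ∧ v ∈ B := by
    intro v
    by_cases hvW : v ∈ W5
    · by_cases hvS : v ∈ S
      · refine ⟨S, ⟨(hmemP' S).2 (Or.inl rfl), hvS⟩, ?_⟩
        rintro C ⟨hC, hvC⟩
        rcases (hmemP' C).1 hC with rfl | ⟨u, huT, rfl⟩ | hCQ
        · rfl
        · have : v = u := mem_singleton.1 hvC
          exact absurd hvS (by rw [this]; exact (mem_sdiff.1 huT).2)
        · exact absurd hvW (hQW5 C hCQ v hvC)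
      · have hvT : v ∈ T := mem_sdiff.2 ⟨hvW, hvS⟩
        refine ⟨{v}, ⟨(hmemP' _).2 (Or.inr (Or.inl ⟨v, hvT, rfl⟩)), mem_singleton_self v⟩, ?_⟩
        rintro C ⟨hC, hvC⟩
        rcases (hmemP' C).1 hC with rfl | ⟨u, huT, rfl⟩ | hCQ
        · exact absurd hvC hvS
        · rw [mem_singleton.1 hvC]
        · exact absurd hvW (hQW5 C hCQ v hvC)
    · obtain ⟨B, ⟨hB, hvB⟩, hBuniq⟩ := huniq v
      have hBA : B ≠ A := fun e => hvW ((hW5 v).2 (Or.inl (e ▸ hvB)))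
      have hBU : B ≠ U := fun e => hvW ((hW5 v).2 (Or.inr (Or.inl (e ▸ hvB))))
      have hBU' : B ≠ U' := fun e => hvW ((hW5 v).2 (Or.inr (Or.inr (e ▸ hvB))))
      have hBQ : B ∈ Q := mem_erase.2 ⟨hBU', mem_erase.2 ⟨hBU, mem_erase.2 ⟨hBA, hB⟩⟩⟩
      refine ⟨B, ⟨(hmemP' B).2 (Or.inr (Or.inr hBQ)), hvB⟩, ?_⟩
      rintro C ⟨hC, hvC⟩
      rcases (hmemP' C).1 hC with rfl | ⟨u, huT, rfl⟩ | hCQ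
      · exact absurd (hSsub hvC) hvW
      · exact absurd ((mem_singleton.1 hvC) ▸ (mem_sdiff.1 huT).1) hvW
      · exact hBuniq C ⟨hQP hCQ, hvC⟩
  have hindep' : ∀ B ∈ P', ∀ u ∈ B, ∀ v ∈ B, ¬ G.Adj u v := by
    intro B hB u hu v hv
    rcases (hmemP' B).1 hB with rfl | ⟨u0, _, rfl⟩ | hBQ
    · simp only [hSdef, mem_insert, mem_singleton] at hu hv
      rcases hu with rfl | rfl | rfl <;> rcases hv with rfl | rfl | rfl <;>
        first
          | exact G.irrefl
          | exact axy | exact axz | exact ayz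
          | exact fun hh => axy hh.symm
          | exact fun hh => axz hh.symm
          | exact fun hh => ayz hh.symm
    · rw [mem_singleton.1 hu, mem_singleton.1 hv]; exact G.irrefl
    · exact hindep B (hQP hBQ) u hu v hv
  have hcards' : ∀ B ∈ P', B.card = 1 ∨ B.card = 2 ∨ B.card = 3 := by
    intro B hB
    rcases (hmemP' B).1 hB with rfl | ⟨u0, _, rfl⟩ | hBQ
    · exact Or.inr (Or.inr hScard)
    · exact Or.inl (card_singleton _)
    · exact hcards B (hQP hBQ)
  have hSP : S ∉ P := by
    intro hSP
    have hxS : x ∈ S := by simp [hSdef]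
    rcases (hW5 x).1 hx with h1 | h1 | h1
    · exact hdisj S hSP A hA (fun e => by rw [e, hAw] at hScard; simp at hScard) x hxS h1
    · exact hdisj S hSP U hU (fun e => by rw [e, hU2] at hScard; omega) x hxS h1
    · exact hdisj S hSP U' hU' (fun e => by rw [e, hU'2] at hScard; omega) x hxS h1
  have hsub : insert S (P.filter fun B => B.card = 3) ⊆ P'.filter fun B => B.card = 3 := by
    intro B hB
    rcases mem_insert.1 hB with rfl | hB
    · exact mem_filter.2 ⟨(hmemP' _).2 (Or.inl rfl), hScard⟩
    · obtain ⟨hBP, hB3⟩ := mem_filter.1 hB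
      have hBA : B ≠ A := fun e => by rw [e, hAw] at hB3; simp at hB3
      have hBU : B ≠ U := fun e => by rw [e, hU2] at hB3; omega
      have hBU' : B ≠ U' := fun e => by rw [e, hU'2] at hB3; omega
      exact mem_filter.2 ⟨(hmemP' B).2 (Or.inr (Or.inr
        (mem_erase.2 ⟨hBU', mem_erase.2 ⟨hBU, mem_erase.2 ⟨hBA, hBP⟩⟩⟩))), hB3⟩
  have hcount : r + 1 ≤ (P'.filter fun B => B.card = 3).card := by
    have h1 := card_le_card hsub
    rwa [card_insert_of_notMem (fun hc => hSP (mem_filter.1 hc).1), hr] at h1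
  rcases hmax P' _ _ _ ⟨huniq', hindep', rfl, rfl, rfl, hcards'⟩ with h1 | ⟨h1, _⟩ <;> omega

set_option maxHeartbeats 1600000 in
theorem stmt15 [Fintype V] [DecidableEq V] (G : SimpleGraph V) [DecidableRel G.Adj]
    (P : Finset (Finset V)) (r s t : ℕ)
    (h : IsMaxRST G P r s t)
    (A U U' : Finset V) (w : V)
    (hA : A ∈ P) (hAw : A = {w})
    (hU : U ∈ P) (hU2 : U.card = 2) (hU' : U' ∈ P) (hU'2 : U'.card = 2)
    (hne : U ≠ U')
    (hwU : eB G {w} U = 1) (hwU' : eB G {w} U' = 1) (hUU' : eB G U U' = 2) :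
    Nonempty
      ((G.induce (↑(insert w (U ∪ U')) : Set V)) ≃g
        (SimpleGraph.fromRel fun p q : Fin 2 ⊕ Fin 3 => p.isLeft = q.isLeft)) := by
  have huniq := h.1.1
  have hindep := h.1.2.1
  have hdisjC : ∀ B ∈ P, ∀ C ∈ P, B ≠ C → ∀ v, v ∈ B → v ∈ C → False := by
    intro B hB C hC hBC v hvB hvC
    obtain ⟨D, _, hDuniq⟩ := huniq v
    exact hBC ((hDuniq B ⟨hB, hvB⟩).trans (hDuniq C ⟨hC, hvC⟩).symm)
  have hAU : A ≠ U := fun e => by rw [← e, hAw] at hU2; simp at hU2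
  have hAU' : A ≠ U' := fun e => by rw [← e, hAw] at hU'2; simp at hU'2
  have hwUm : w ∉ U := fun hw => hdisjC A hA U hU hAU w (by simp [hAw]) hw
  have hwU'm : w ∉ U' := fun hw => hdisjC A hA U' hU' hAU' w (by simp [hAw]) hw
  have hdUU' : ∀ v, v ∈ U → v ∈ U' → False := hdisjC U hU U' hU' hne
  obtain ⟨a, a', haa'0, hUeq⟩ := Finset.card_eq_two.1 hU2
  obtain ⟨b, b', hbb'0, hU'eq⟩ := Finset.card_eq_two.1 hU'2
  subst hUeq; subst hU'eq
  have hwa0 : w ≠ a := fun e => hwUm (by simp [e])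
  have hwa'0 : w ≠ a' := fun e => hwUm (by simp [e])
  have hwb0 : w ≠ b := fun e => hwU'm (by simp [e])
  have hwb'0 : w ≠ b' := fun e => hwU'm (by simp [e])
  have hab0 : a ≠ b := fun e => hdUU' a (by simp) (by simp [e])
  have hab'0 : a ≠ b' := fun e => hdUU' a (by simp) (by simp [e])
  have ha'b0 : a' ≠ b := fun e => hdUU' a' (by simp) (by simp [e])
  have ha'b'0 : a' ≠ b' := fun e => hdUU' a' (by simp) (by simp [e])
  have haa' : ¬G.Adj a a' := hindep _ hU a (by simp) a' (by simp)
  have hbb' : ¬G.Adj b b' := hindep _ hU' b (by simp) b' (by simp)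
  have memW : ∀ x : V, (x = w ∨ x = a ∨ x = a' ∨ x = b ∨ x = b') →
      x ∈ insert w ({a, a'} ∪ {b, b'} : Finset V) := by
    rintro x (rfl | rfl | rfl | rfl | rfl)
    · exact mem_insert_self _ _
    · exact mem_insert_of_mem (mem_union_left _ (mem_insert_self _ _))
    · exact mem_insert_of_mem (mem_union_left _ (by simp))
    · exact mem_insert_of_mem (mem_union_right _ (mem_insert_self _ _))
    · exact mem_insert_of_mem (mem_union_right _ (by simp))
  have nt : ∀ x y z : V,
      (x = w ∨ x = a ∨ x = a' ∨ x = b ∨ x = b') →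
      (y = w ∨ y = a ∨ y = a' ∨ y = b ∨ y = b') →
      (z = w ∨ z = a ∨ z = a' ∨ z = b ∨ z = b') →
      x ≠ y → x ≠ z → y ≠ z →
      ¬G.Adj x y → ¬G.Adj x z → ¬G.Adj y z → False := by
    intro x y z hx hy hz
    exact noTriple G P r s t h A {a, a'} {b, b'} w hA hAw
      hU hU2 hU' hU'2 x y z (memW x hx) (memW y hy) (memW z hz)
  have pA : ∀ x : V, (x = w ∨ x = a' ∨ x = a ∨ x = b ∨ x = b') →
      (x = w ∨ x = a ∨ x = a' ∨ x = b ∨ x = b') := by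
    rintro x (hh | hh | hh | hh | hh)
    exacts [Or.inl hh, Or.inr (Or.inr (Or.inl hh)), Or.inr (Or.inl hh),
      Or.inr (Or.inr (Or.inr (Or.inl hh))), Or.inr (Or.inr (Or.inr (Or.inr hh)))]
  have pB : ∀ x : V, (x = w ∨ x = a ∨ x = a' ∨ x = b' ∨ x = b) →
      (x = w ∨ x = a ∨ x = a' ∨ x = b ∨ x = b') := by
    rintro x (hh | hh | hh | hh | hh)
    exacts [Or.inl hh, Or.inr (Or.inl hh), Or.inr (Or.inr (Or.inl hh)),
      Or.inr (Or.inr (Or.inr (Or.inr hh))), Or.inr (Or.inr (Or.inr (Or.inl hh)))]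
  have pAB : ∀ x : V, (x = w ∨ x = a' ∨ x = a ∨ x = b' ∨ x = b) →
      (x = w ∨ x = a ∨ x = a' ∨ x = b ∨ x = b') := by
    rintro x (hh | hh | hh | hh | hh)
    exacts [Or.inl hh, Or.inr (Or.inr (Or.inl hh)), Or.inr (Or.inl hh),
      Or.inr (Or.inr (Or.inr (Or.inr hh))), Or.inr (Or.inr (Or.inr (Or.inl hh)))]
  rw [eB_sp G w a a' haa'0] at hwU
  rw [eB_sp G w b b' hbb'0] at hwU'
  by_cases hwa : G.Adj w a
  · have hwa' : ¬G.Adj w a' := by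
      intro hc; rw [if_pos hwa, if_pos hc] at hwU; omega
    by_cases hwb : G.Adj w b
    · have hwb' : ¬G.Adj w b' := by
        intro hc; rw [if_pos hwb, if_pos hc] at hwU'; omega
      exact key_s15 G w a a' b b' hwa0 hwa'0 hwb0 hwb'0 haa'0 hbb'0 hab0 hab'0 ha'b0 ha'b'0
        nt hwa hwa' hwb hwb' haa' hbb' hUU'
    · have hwb' : G.Adj w b' := by
        by_contra hc; rw [if_neg hwb, if_neg hc] at hwU'; omega
      rw [Finset.pair_comm b b'] at hUU' ⊢
      exact key_s15 G w a a' b' b hwa0 hwa'0 hwb'0 hwb0 haa'0 hbb'0.symm hab'0 hab0 ha'b'0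
        ha'b0 (fun x y z hx hy hz => nt x y z (pB x hx) (pB y hy) (pB z hz))
        hwa hwa' hwb' hwb haa' (fun hh => hbb' hh.symm) hUU'
  · have hwa' : G.Adj w a' := by
      by_contra hc; rw [if_neg hwa, if_neg hc] at hwU; omega
    by_cases hwb : G.Adj w b
    · have hwb' : ¬G.Adj w b' := by
        intro hc; rw [if_pos hwb, if_pos hc] at hwU'; omega
      rw [Finset.pair_comm a a'] at hUU' ⊢
      exact key_s15 G w a' a b b' hwa'0 hwa0 hwb0 hwb'0 haa'0.symm hbb'0 ha'b0 ha'b'0 hab0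
        hab'0 (fun x y z hx hy hz => nt x y z (pA x hx) (pA y hy) (pA z hz))
        hwa' hwa hwb hwb' (fun hh => haa' hh.symm) hbb' hUU'
    · have hwb' : G.Adj w b' := by
        by_contra hc; rw [if_neg hwb, if_neg hc] at hwU'; omega
      rw [Finset.pair_comm a a', Finset.pair_comm b b'] at hUU' ⊢
      exact key_s15 G w a' a b' b hwa'0 hwa0 hwb'0 hwb0 haa'0.symm hbb'0.symm ha'b'0 ha'b0
        hab'0 hab0 (fun x y z hx hy hz => nt x y z (pAB x hx) (pAB y hy) (pAB z hz))
        hwa' hwa hwb' hwb (fun hh => haa' hh.symm) (fun hh => hbb' hh.symm) hUU'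
end
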